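/- arXiv:math/0609816 — 3 statements merged into one kernel-verified Lean document; each statement's English description precedes it below -/
import Mathlib

section
/- There is a constant C < ∞ such that for every integer n ≥ 1 and every choice of real coefficients α(R) indexed by the dyadic rectangles R in [0,1]² with |R| ≥ 2^{-n}, one has 2^{-n} · ∑_{|R| = 2^{-n}} |α(R)| ≤ C · ‖ ∑_{|R| ≥ 2^{-n}} α(R) h_R ‖_{L^∞([0,1]²)}, where the sum on the right is over all dyadic rectangles in [0,1]² of area at least 2^{-n}. -/
open MeasureTheory


/-- The L^∞-normalized Haar function of the dyadic interval `[j/2^k, (j+1)/2^k)`. -/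
noncomputable def haar (k j : ℕ) (x : ℝ) : ℝ :=
  if (j : ℝ) / 2 ^ k ≤ x ∧ x < ((j : ℝ) + 1 / 2) / 2 ^ k then -1
  else if ((j : ℝ) + 1 / 2) / 2 ^ k ≤ x ∧ x < ((j : ℝ) + 1) / 2 ^ k then 1
  else 0

/-- The dyadic interval `[j/2^k, (j+1)/2^k)`. -/
def Ik (k j : ℕ) : Set ℝ := Set.Ico ((j : ℝ) / 2 ^ k) (((j : ℝ) + 1) / 2 ^ k)

noncomputable def ν : Measure ℝ := volume.restrict (Set.Icc (0:ℝ) 1)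

instance : IsFiniteMeasure ν := by
  constructor
  rw [ν, Measure.restrict_apply_univ, Real.volume_Icc]
  norm_num

lemma measurable_haar (k j : ℕ) : Measurable (haar k j) := by
  unfold haar
  exact Measurable.ite measurableSet_Ico measurable_const
    (Measurable.ite measurableSet_Ico measurable_const measurable_const)

lemma abs_haar_le_one (k j : ℕ) (x : ℝ) : |haar k j x| ≤ 1 := by
  unfold haar; split_ifs <;> norm_num

lemma haar_mem_of_ne_zero {k j : ℕ} {x : ℝ} (h : haar k j x ≠ 0) : x ∈ Ik k j := by
  have h2 : (0:ℝ) < 2 ^ k := by positivity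
  unfold haar at h
  rw [Ik, Set.mem_Ico]
  split_ifs at h with h1 h2'
  · exact ⟨h1.1, lt_of_lt_of_le h1.2 (by rw [div_le_div_iff₀ h2 h2]; nlinarith)⟩
  · exact ⟨le_trans (by rw [div_le_div_iff₀ h2 h2]; nlinarith) h2'.1, h2'.2⟩
  · exact absurd rfl h

lemma Ik_inj {k j j' : ℕ} {x : ℝ} (h : x ∈ Ik k j) (h' : x ∈ Ik k j') : j = j' := by
  have h2 : (0:ℝ) < 2 ^ k := by positivity
  rw [Ik, Set.mem_Ico] at h h'
  have e1 : (j:ℝ) < (j':ℝ) + 1 := by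
    have := lt_of_le_of_lt h.1 h'.2
    rwa [div_lt_div_iff₀ h2 h2, mul_lt_mul_iff_of_pos_right h2] at this
  have e2 : (j':ℝ) < (j:ℝ) + 1 := by
    have := lt_of_le_of_lt h'.1 h.2
    rwa [div_lt_div_iff₀ h2 h2, mul_lt_mul_iff_of_pos_right h2] at this
  have f1 : j < j' + 1 := by exact_mod_cast e1
  have f2 : j' < j + 1 := by exact_mod_cast e2
  omega

/-- The defining condition of the left half, in terms of floors. -/
lemma haar_cond1_iff (k j : ℕ) (x : ℝ) :
    ((j : ℝ) / 2 ^ k ≤ x ∧ x < ((j : ℝ) + 1 / 2) / 2 ^ k) ↔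
      ⌊(2:ℝ) ^ (k+1) * x⌋ = 2 * (j : ℤ) := by
  have h2 : (0:ℝ) < 2 ^ (k+1) := by positivity
  have e1 : (j : ℝ) / 2 ^ k = (2 * (j:ℝ)) / 2 ^ (k+1) := by
    rw [pow_succ]; ring
  have e2 : ((j : ℝ) + 1/2) / 2 ^ k = (2 * (j:ℝ) + 1) / 2 ^ (k+1) := by
    rw [pow_succ]; ring
  rw [e1, e2, Int.floor_eq_iff, div_le_iff₀ h2, lt_div_iff₀ h2]
  push_cast
  constructor
  · rintro ⟨a, b⟩; constructor <;> nlinarith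
  · rintro ⟨a, b⟩; constructor <;> nlinarith

lemma haar_cond2_iff (k j : ℕ) (x : ℝ) :
    (((j : ℝ) + 1 / 2) / 2 ^ k ≤ x ∧ x < ((j : ℝ) + 1) / 2 ^ k) ↔
      ⌊(2:ℝ) ^ (k+1) * x⌋ = 2 * (j : ℤ) + 1 := by
  have h2 : (0:ℝ) < 2 ^ (k+1) := by positivity
  have e1 : ((j : ℝ) + 1/2) / 2 ^ k = (2 * (j:ℝ) + 1) / 2 ^ (k+1) := by
    rw [pow_succ]; ring
  have e2 : ((j : ℝ) + 1) / 2 ^ k = (2 * (j:ℝ) + 2) / 2 ^ (k+1) := by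
    rw [pow_succ]; ring
  rw [e1, e2, Int.floor_eq_iff, div_le_iff₀ h2, lt_div_iff₀ h2]
  push_cast
  constructor
  · rintro ⟨a, b⟩; constructor <;> nlinarith
  · rintro ⟨a, b⟩; constructor <;> nlinarith

lemma haar_congr {k j : ℕ} {x y : ℝ}
    (h : ⌊(2:ℝ) ^ (k+1) * x⌋ = ⌊(2:ℝ) ^ (k+1) * y⌋) : haar k j x = haar k j y := by
  unfold haar
  rw [if_congr ((haar_cond1_iff k j x).trans (h ▸ (haar_cond1_iff k j y).symm)) rfl
    (if_congr ((haar_cond2_iff k j x).trans (h ▸ (haar_cond2_iff k j y).symm)) rfl rfl)]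

/-- On a finer dyadic interval, the floor at a coarser scale is constant. -/
lemma floor_const {K k : ℕ} (hk : k < K) (j : ℕ) {x : ℝ} (hx : x ∈ Ik K j) :
    ⌊(2:ℝ) ^ (k+1) * x⌋ = ((j / 2 ^ (K - k - 1) : ℕ) : ℤ) := by
  set D : ℕ := 2 ^ (K - k - 1) with hD
  set q : ℕ := j / D with hq
  have hDpos : 0 < D := Nat.pow_pos (by norm_num)
  have hKD : (2:ℝ) ^ K = 2 ^ (k+1) * (D : ℝ) := by
    rw [hD]; push_cast
    rw [← pow_add]
    congr 1
    omega
  have h2 : (0:ℝ) < 2 ^ K := by positivity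
  have h21 : (0:ℝ) < 2 ^ (k+1) := by positivity
  have hDR : (0:ℝ) < (D:ℝ) := by exact_mod_cast hDpos
  rw [Ik, Set.mem_Ico] at hx
  have hql : q * D ≤ j := Nat.div_mul_le_self j D
  have hqu : j < (q + 1) * D := by
    have h1 := Nat.div_add_mod j D
    have h2 := Nat.mod_lt j hDpos
    have h3 : j = D * q + j % D := by rw [hq]; omega
    calc j = D * q + j % D := h3
    _ < D * q + D := by omega
    _ = (q + 1) * D := by ring
  rw [Int.floor_eq_iff]
  constructor
  · push_cast
    calc (q:ℝ) = (q * D : ℝ) / D := by field_simp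
    _ ≤ (j : ℝ) / D := by
        apply div_le_div_of_nonneg_right ?_ hDR.le
        exact_mod_cast hql
    _ = 2 ^ (k+1) * ((j:ℝ) / 2 ^ K) := by rw [hKD]; field_simp
    _ ≤ 2 ^ (k+1) * x := by
        apply mul_le_mul_of_nonneg_left hx.1 (le_of_lt h21)
  · push_cast
    calc 2 ^ (k+1) * x < 2 ^ (k+1) * (((j:ℝ) + 1) / 2 ^ K) := by
          apply mul_lt_mul_of_pos_left hx.2 h21
    _ = ((j:ℝ) + 1) / D := by rw [hKD]; field_simp
    _ ≤ ((q:ℝ) + 1) := by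
        rw [div_le_iff₀ hDR]
        have : ((j:ℝ) + 1) ≤ ((q + 1) * D : ℕ) := by exact_mod_cast hqu
        push_cast at this ⊢
        linarith

/-- A Haar function at a coarser scale is constant on a finer dyadic interval. -/
lemma haar_const {K k : ℕ} (hk : k < K) (j j' : ℕ) {x : ℝ} (hx : x ∈ Ik K j) :
    haar k j' x = haar k j' ((j : ℝ) / 2 ^ K) := by
  have h2 : (0:ℝ) < 2 ^ K := by positivity
  have hl : ((j:ℝ) / 2 ^ K) ∈ Ik K j := by
    rw [Ik, Set.mem_Ico]
    refine ⟨le_refl _, by rw [div_lt_div_iff₀ h2 h2]; nlinarith⟩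
  exact haar_congr ((floor_const hk j hx).trans (floor_const hk j hl).symm)

section Integrals

lemma integrable_nu {g : ℝ → ℝ} (hm : Measurable g) {C : ℝ} (hb : ∀ x, |g x| ≤ C) :
    Integrable g ν :=
  (integrable_const C).mono' hm.aestronglyMeasurable
    (Filter.Eventually.of_forall fun x => by simpa [Real.norm_eq_abs] using hb x)

lemma haar_eq_indicator (k j : ℕ) :
    haar k j = fun x =>
      (Set.Ico (((j:ℝ) + 1 / 2) / 2 ^ k) (((j:ℝ) + 1) / 2 ^ k)).indicator (fun _ => (1:ℝ)) x -
      (Set.Ico ((j:ℝ) / 2 ^ k) (((j:ℝ) + 1 / 2) / 2 ^ k)).indicator (fun _ => (1:ℝ)) x := by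
  funext x
  unfold haar
  rw [Set.indicator_apply, Set.indicator_apply]
  simp only [Set.mem_Ico]
  split_ifs with h1 h2 <;> try norm_num
  linarith [h1.2, h2.1]

lemma setIntegral_indicator_Ico {a b : ℝ} (hab : a ≤ b) (h0 : 0 ≤ a) (h1 : b ≤ 1) :
    ∫ x, (Set.Ico a b).indicator (fun _ => (1:ℝ)) x ∂ν = b - a := by
  rw [ν, setIntegral_indicator measurableSet_Ico]
  have hsub : Set.Icc (0:ℝ) 1 ∩ Set.Ico a b = Set.Ico a b := by
    apply Set.inter_eq_self_of_subset_right
    exact (Set.Ico_subset_Icc_self).trans (Set.Icc_subset_Icc h0 h1)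
  rw [hsub, setIntegral_const, measureReal_def, Real.volume_Ico, smul_eq_mul, mul_one,
    ENNReal.toReal_ofReal (by linarith)]

/-- The integral of a Haar function vanishes. -/
lemma integral_haar (k j : ℕ) (hj : j < 2 ^ k) : ∫ x, haar k j x ∂ν = 0 := by
  have h2 : (0:ℝ) < 2 ^ k := by positivity
  have hj' : ((j:ℝ) + 1) ≤ 2 ^ k := by
    have : (j:ℝ) + 1 ≤ ((2:ℝ)) ^ k := by exact_mod_cast Nat.succ_le_of_lt hj
    simpa using this
  have hb0 : (0:ℝ) ≤ (j:ℝ) / 2 ^ k := by positivity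
  have hmid0 : (0:ℝ) ≤ ((j:ℝ) + 1 / 2) / 2 ^ k := by positivity
  have hord : ((j:ℝ)) / 2 ^ k ≤ ((j:ℝ) + 1 / 2) / 2 ^ k := by
    apply div_le_div_of_nonneg_right ?_ h2.le
    linarith
  have hord2 : ((j:ℝ) + 1 / 2) / 2 ^ k ≤ ((j:ℝ) + 1) / 2 ^ k := by
    apply div_le_div_of_nonneg_right ?_ h2.le
    linarith
  have hub : ((j:ℝ) + 1) / 2 ^ k ≤ 1 := by
    rw [div_le_one h2]; exact hj'
  have hub2 : ((j:ℝ) + 1 / 2) / 2 ^ k ≤ 1 := le_trans hord2 hub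
  rw [haar_eq_indicator]
  rw [integral_sub]
  · rw [setIntegral_indicator_Ico hord2 hmid0 hub, setIntegral_indicator_Ico hord hb0 hub2]
    ring
  · exact integrable_nu ((measurable_const.indicator measurableSet_Ico))
      (C := 1) (fun x => by rw [Set.indicator_apply]; split_ifs <;> norm_num)
  · exact integrable_nu ((measurable_const.indicator measurableSet_Ico))
      (C := 1) (fun x => by rw [Set.indicator_apply]; split_ifs <;> norm_num)

lemma haar_sq (k j : ℕ) (x : ℝ) :
    haar k j x * haar k j x = (Ik k j).indicator (fun _ => (1:ℝ)) x := by
  classical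
  have h2 : (0:ℝ) < 2 ^ k := by positivity
  rw [Set.indicator_apply]
  unfold haar Ik
  simp only [Set.mem_Ico]
  split_ifs with h1 h2' h3 h4 h5 <;> try norm_num
  · exact absurd ⟨h1.1, lt_of_lt_of_le h1.2 (by apply div_le_div_of_nonneg_right ?_ h2.le; linarith)⟩ h2'
  · exact absurd ⟨le_trans (by apply div_le_div_of_nonneg_right ?_ h2.le; linarith) h3.1, h3.2⟩ h4
  · rcases lt_or_ge x (((j:ℝ) + 1 / 2) / 2 ^ k) with hc | hc
    · exact absurd ⟨h5.1, hc⟩ h1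
    · exact absurd ⟨hc, h5.2⟩ h3

/-- Orthogonality at the same scale. -/
lemma integral_haar_mul (k : ℕ) {j j' : ℕ} (hj : j < 2 ^ k) (hj' : j' < 2 ^ k) :
    ∫ x, haar k j x * haar k j' x ∂ν = if j = j' then ((2:ℝ) ^ k)⁻¹ else 0 := by
  have h2 : (0:ℝ) < 2 ^ k := by positivity
  split_ifs with h
  · subst h
    have : ∀ x, haar k j x * haar k j x = (Ik k j).indicator (fun _ => (1:ℝ)) x := haar_sq k j
    rw [show (fun x => haar k j x * haar k j x) = fun x => (Ik k j).indicator (fun _ => (1:ℝ)) x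
        from funext this]
    have hj'' : ((j:ℝ) + 1) ≤ 2 ^ k := by
      have : (j:ℝ) + 1 ≤ ((2:ℝ)) ^ k := by exact_mod_cast Nat.succ_le_of_lt hj
      simpa using this
    rw [Ik, setIntegral_indicator_Ico
      (by apply div_le_div_of_nonneg_right ?_ h2.le; linarith) (by positivity)
      (by rw [div_le_one h2]; exact hj'')]
    field_simp
    ring
  · have hz : ∀ x, haar k j x * haar k j' x = 0 := by
      intro x
      by_cases hx : haar k j x = 0
      · rw [hx, zero_mul]
      by_cases hx' : haar k j' x = 0
      · rw [hx', mul_zero]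
      exact absurd (Ik_inj (haar_mem_of_ne_zero hx) (haar_mem_of_ne_zero hx')) h
    rw [show (fun x => haar k j x * haar k j' x) = fun _ => (0:ℝ) from funext hz]
    simp

/-- Orthogonality across scales: coarse times fine integrates to zero. -/
lemma integral_haar_mul_cross {b K : ℕ} (hbK : b < K) (jb : ℕ) {j' : ℕ} (hj' : j' < 2 ^ K) :
    ∫ x, haar b jb x * haar K j' x ∂ν = 0 := by
  have hpt : ∀ x, haar b jb x * haar K j' x
      = haar b jb ((j' : ℝ) / 2 ^ K) * haar K j' x := by
    intro x
    by_cases hx : haar K j' x = 0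
    · rw [hx, mul_zero, mul_zero]
    · rw [haar_const hbK j' jb (haar_mem_of_ne_zero hx)]
  rw [show (fun x => haar b jb x * haar K j' x)
      = fun x => haar b jb ((j' : ℝ) / 2 ^ K) * haar K j' x from funext hpt,
    integral_const_mul, integral_haar K j' hj', mul_zero]

end Integrals

/-- Key collapse lemma: a combination of scale-`K` Haar functions integrates to zero
against any bounded measurable function which is constant on scale-`K` dyadic intervals. -/
lemma SL {ι : Type*} (T : Finset ι) (c : ι → ℝ) (ρ : ι → ℕ) (K : ℕ)
    (hρ : ∀ i ∈ T, ρ i < 2 ^ K) (g : ℝ → ℝ) (hg : Measurable g) (C : ℝ)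
    (hb : ∀ y, |g y| ≤ C)
    (hconst : ∀ i ∈ T, ∀ y ∈ Ik K (ρ i), g y = g ((ρ i : ℝ) / 2 ^ K)) :
    ∫ y, (∑ i ∈ T, c i * haar K (ρ i) y) * g y ∂ν = 0 := by
  have hpt : ∀ y, (∑ i ∈ T, c i * haar K (ρ i) y) * g y
      = ∑ i ∈ T, (c i * g ((ρ i : ℝ) / 2 ^ K)) * haar K (ρ i) y := by
    intro y
    rw [Finset.sum_mul]
    apply Finset.sum_congr rfl
    intro i hi
    by_cases hy : haar K (ρ i) y = 0
    · rw [hy]; ring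
    · rw [hconst i hi y (haar_mem_of_ne_zero hy)]; ring
  rw [show (fun y => (∑ i ∈ T, c i * haar K (ρ i) y) * g y)
      = fun y => ∑ i ∈ T, (c i * g ((ρ i : ℝ) / 2 ^ K)) * haar K (ρ i) y from funext hpt]
  rw [integral_finset_sum]
  · apply Finset.sum_eq_zero
    intro i hi
    rw [integral_const_mul, integral_haar K (ρ i) (hρ i hi), mul_zero]
  · intro i hi
    apply integrable_nu ((measurable_const.mul (measurable_haar K (ρ i))))
      (C := |c i * g ((ρ i : ℝ) / 2 ^ K)|)
    intro x
    show |c i * g ((ρ i : ℝ) / 2 ^ K) * haar K (ρ i) x| ≤ _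
    rw [abs_mul]
    calc |c i * g ((ρ i : ℝ) / 2 ^ K)| * |haar K (ρ i) x|
        ≤ |c i * g ((ρ i : ℝ) / 2 ^ K)| * 1 :=
          mul_le_mul_of_nonneg_left (abs_haar_le_one _ _ _) (abs_nonneg _)
    _ = |c i * g ((ρ i : ℝ) / 2 ^ K)| := mul_one _

section TwoD

/-- The Haar function of a dyadic rectangle in `[0,1]^d`. -/
noncomputable def haarRect (d : ℕ) (R : Fin d → ℕ × ℕ) (x : Fin d → ℝ) : ℝ :=
  ∏ i, haar (R i).1 (R i).2 (x i)

/-- Dyadic rectangles in `[0,1]^d` of volume exactly `2^(-n)`. -/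
def dyadicRects (d n : ℕ) : Finset (Fin d → ℕ × ℕ) :=
  (Fintype.piFinset fun _ : Fin d => Finset.range (n + 1) ×ˢ Finset.range (2 ^ n)).filter
    fun R => (∑ i, (R i).1) = n ∧ ∀ i, (R i).2 < 2 ^ (R i).1

/-- Dyadic rectangles in `[0,1]^d` of volume at least `2^(-n)`. -/
def dyadicRectsGe (d n : ℕ) : Finset (Fin d → ℕ × ℕ) :=
  (Fintype.piFinset fun _ : Fin d => Finset.range (n + 1) ×ˢ Finset.range (2 ^ n)).filter
    fun R => (∑ i, (R i).1) ≤ n ∧ ∀ i, (R i).2 < 2 ^ (R i).1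

/-- The unit cube `[0,1]^d`. -/
def cube (d : ℕ) : Set (Fin d → ℝ) := Set.univ.pi fun _ => Set.Icc (0 : ℝ) 1

/-- Lebesgue measure restricted to the unit cube `[0,1]^d`. -/
noncomputable def μcube (d : ℕ) : Measure (Fin d → ℝ) := volume.restrict (cube d)

lemma haarRect_two (Q : Fin 2 → ℕ × ℕ) (x : Fin 2 → ℝ) :
    haarRect 2 Q x = haar (Q 0).1 (Q 0).2 (x 0) * haar (Q 1).1 (Q 1).2 (x 1) := by
  rw [haarRect, Fin.prod_univ_two]

lemma measurable_haarRect (Q : Fin 2 → ℕ × ℕ) : Measurable (haarRect 2 Q) := by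
  apply Finset.measurable_prod
  intro i _
  exact (measurable_haar _ _).comp (measurable_pi_apply i)

lemma abs_haarRect_le_one (Q : Fin 2 → ℕ × ℕ) (x : Fin 2 → ℝ) : |haarRect 2 Q x| ≤ 1 := by
  rw [haarRect, Finset.abs_prod]
  exact Finset.prod_le_one (fun i _ => abs_nonneg _) (fun i _ => abs_haar_le_one _ _ _)

/-- Sign of a coefficient. -/
noncomputable def sgn (α : (Fin 2 → ℕ × ℕ) → ℝ) (R : Fin 2 → ℕ × ℕ) : ℝ :=
  if α R < 0 then -1 else 1

lemma abs_sgn (α : (Fin 2 → ℕ × ℕ) → ℝ) (R : Fin 2 → ℕ × ℕ) : |sgn α R| = 1 := by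
  rw [sgn]; split_ifs <;> norm_num

lemma mul_sgn (α : (Fin 2 → ℕ × ℕ) → ℝ) (R : Fin 2 → ℕ × ℕ) : α R * sgn α R = |α R| := by
  rw [sgn]
  split_ifs with h
  · rw [abs_of_neg h]; ring
  · rw [abs_of_nonneg (not_lt.1 h)]; ring

/-- Finest rectangles with first scale `k`. -/
def Fk (n k : ℕ) : Finset (Fin 2 → ℕ × ℕ) := (dyadicRects 2 n).filter fun Q => (Q 0).1 = k

/-- The Riesz product factor. -/
noncomputable def fk (α : (Fin 2 → ℕ × ℕ) → ℝ) (n k : ℕ) (x : Fin 2 → ℝ) : ℝ :=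
  ∑ Q ∈ Fk n k, sgn α Q * haarRect 2 Q x

/-- The Riesz product. -/
noncomputable def Psi (α : (Fin 2 → ℕ × ℕ) → ℝ) (n : ℕ) (x : Fin 2 → ℝ) : ℝ :=
  ∏ k ∈ Finset.range (n + 1), (fk α n k x + 1)

lemma mem_Ge {n : ℕ} {R : Fin 2 → ℕ × ℕ} (h : R ∈ dyadicRectsGe 2 n) :
    (R 0).1 + (R 1).1 ≤ n ∧ (R 0).2 < 2 ^ (R 0).1 ∧ (R 1).2 < 2 ^ (R 1).1 := by
  rw [dyadicRectsGe, Finset.mem_filter] at h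
  obtain ⟨-, hsum, hpos⟩ := h
  rw [Fin.sum_univ_two] at hsum
  exact ⟨hsum, hpos 0, hpos 1⟩

lemma mem_Fk {n k : ℕ} {Q : Fin 2 → ℕ × ℕ} (h : Q ∈ Fk n k) :
    (Q 0).1 = k ∧ (Q 1).1 = n - k ∧ k ≤ n ∧ (Q 0).2 < 2 ^ k ∧ (Q 1).2 < 2 ^ (n - k) := by
  rw [Fk, Finset.mem_filter, dyadicRects, Finset.mem_filter] at h
  obtain ⟨⟨-, hsum, hpos⟩, hk⟩ := h
  rw [Fin.sum_univ_two] at hsum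
  have h1 : (Q 1).1 = n - k := by omega
  refine ⟨hk, h1, by omega, ?_, ?_⟩
  · have := hpos 0; rwa [hk] at this
  · have := hpos 1; rwa [h1] at this

lemma filter_Ge_eq (n : ℕ) :
    (dyadicRectsGe 2 n).filter (fun R => (R 0).1 + (R 1).1 = n) = dyadicRects 2 n := by
  ext R
  rw [Finset.mem_filter, dyadicRectsGe, dyadicRects, Finset.mem_filter, Finset.mem_filter,
    Fin.sum_univ_two]
  constructor
  · rintro ⟨⟨hpi, -, hpos⟩, heq⟩
    exact ⟨hpi, heq, hpos⟩
  · rintro ⟨hpi, heq, hpos⟩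
    exact ⟨⟨hpi, le_of_eq heq, hpos⟩, heq⟩

lemma mem_Fk_of_Ge {n : ℕ} {R : Fin 2 → ℕ × ℕ} (h : R ∈ dyadicRectsGe 2 n)
    (hsum : (R 0).1 + (R 1).1 = n) : R ∈ Fk n ((R 0).1) := by
  rw [Fk, Finset.mem_filter, ← filter_Ge_eq n, Finset.mem_filter]
  exact ⟨⟨h, hsum⟩, rfl⟩

instance : IsFiniteMeasure (μcube 2) := by
  constructor
  rw [μcube, Measure.restrict_apply_univ, cube, volume_pi_pi]
  simp [Real.volume_Icc]

lemma integrable_mucube {Φ : (Fin 2 → ℝ) → ℝ} (hm : Measurable Φ) {C : ℝ}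
    (hb : ∀ x, |Φ x| ≤ C) : Integrable Φ (μcube 2) :=
  (integrable_const C).mono' hm.aestronglyMeasurable
    (Filter.Eventually.of_forall fun x => by simpa [Real.norm_eq_abs] using hb x)

/-- Transport of integrals over the square to the product measure. -/
lemma integral_cube (G : (Fin 2 → ℝ) → ℝ) :
    ∫ x, G x ∂(μcube 2) = ∫ z : ℝ × ℝ, G ![z.1, z.2] ∂(ν.prod ν) := by
  set e : (Fin 2 → ℝ) ≃ᵐ ℝ × ℝ := MeasurableEquiv.finTwoArrow
  have happ : ∀ y : Fin 2 → ℝ, e y = (y 0, y 1) := fun _ => rfl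
  have hsymm : ∀ z : ℝ × ℝ, e.symm z = ![z.1, z.2] := by
    intro z
    funext i
    fin_cases i <;> rfl
  have hset : cube 2 = e ⁻¹' ((Set.Icc (0:ℝ) 1) ×ˢ (Set.Icc (0:ℝ) 1)) := by
    ext x
    rw [cube, Set.mem_pi, Set.mem_preimage, happ, Set.mem_prod]
    constructor
    · intro h; exact ⟨h 0 trivial, h 1 trivial⟩
    · intro h i _
      fin_cases i
      · exact h.1
      · exact h.2
  have h1 : ∫ x, G x ∂(μcube 2) = ∫ y, G (e.symm y) ∂((μcube 2).map e) := by
    rw [integral_map_equiv]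
    congr 1
    funext x
    rw [MeasurableEquiv.symm_apply_apply]
  rw [h1, μcube, hset, ← MeasurableEquiv.restrict_map e volume,
    (volume_preserving_finTwoArrow ℝ).map_eq, Measure.volume_eq_prod,
    ← Measure.prod_restrict]
  show ∫ y, G (e.symm y) ∂(ν.prod ν) = _
  simp only [hsymm]

lemma integral_cube_mul (g0 g1 : ℝ → ℝ) :
    ∫ x, g0 (x 0) * g1 (x 1) ∂(μcube 2) = (∫ y, g0 y ∂ν) * ∫ y, g1 y ∂ν := by
  rw [integral_cube]
  simp only [Matrix.cons_val_zero, Matrix.cons_val_one, Matrix.head_cons]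
  exact integral_prod_mul g0 g1

end TwoD

section FkLemmas

lemma fk_apply (α : (Fin 2 → ℕ × ℕ) → ℝ) (n k : ℕ) (x : Fin 2 → ℝ) :
    fk α n k x = ∑ Q ∈ Fk n k,
      (sgn α Q * haar k (Q 0).2 (x 0)) * haar (n - k) (Q 1).2 (x 1) := by
  rw [fk]
  apply Finset.sum_congr rfl
  intro Q hQ
  obtain ⟨h0, h1, -, -, -⟩ := mem_Fk hQ
  rw [haarRect_two, h0, h1]
  ring

lemma measurable_pair_left (y : ℝ) : Measurable (fun x : ℝ => (![x, y] : Fin 2 → ℝ)) := by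
  apply measurable_pi_lambda
  intro i
  fin_cases i
  · exact measurable_id
  · exact measurable_const

lemma measurable_pair_right (x : ℝ) : Measurable (fun y : ℝ => (![x, y] : Fin 2 → ℝ)) := by
  apply measurable_pi_lambda
  intro i
  fin_cases i
  · exact measurable_const
  · exact measurable_id

lemma measurable_fk (α : (Fin 2 → ℕ × ℕ) → ℝ) (n k : ℕ) : Measurable (fk α n k) := by
  apply Finset.measurable_sum
  intro Q _
  exact (measurable_haarRect Q).const_mul _

lemma abs_fk_le_card (α : (Fin 2 → ℕ × ℕ) → ℝ) (n k : ℕ) (x : Fin 2 → ℝ) :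
    |fk α n k x| ≤ ((Fk n k).card : ℝ) := by
  rw [fk]
  calc |∑ Q ∈ Fk n k, sgn α Q * haarRect 2 Q x|
      ≤ ∑ Q ∈ Fk n k, |sgn α Q * haarRect 2 Q x| := Finset.abs_sum_le_sum_abs _ _
  _ ≤ ∑ Q ∈ Fk n k, 1 := by
      apply Finset.sum_le_sum
      intro Q _
      rw [abs_mul, abs_sgn, one_mul]
      exact abs_haarRect_le_one Q x
  _ = ((Fk n k).card : ℝ) := by simp

lemma haarRect_eq_of_ne_zero {n k : ℕ} {Q Q' : Fin 2 → ℕ × ℕ} (hQ : Q ∈ Fk n k)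
    (hQ' : Q' ∈ Fk n k) {x : Fin 2 → ℝ} (hx : haarRect 2 Q x ≠ 0)
    (hx' : haarRect 2 Q' x ≠ 0) : Q = Q' := by
  obtain ⟨a0, a1, -, -, -⟩ := mem_Fk hQ
  obtain ⟨b0, b1, -, -, -⟩ := mem_Fk hQ'
  rw [haarRect_two] at hx hx'
  have h1 := haar_mem_of_ne_zero (left_ne_zero_of_mul hx)
  have h2 := haar_mem_of_ne_zero (right_ne_zero_of_mul hx)
  have h1' := haar_mem_of_ne_zero (left_ne_zero_of_mul hx')
  have h2' := haar_mem_of_ne_zero (right_ne_zero_of_mul hx')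
  rw [a0] at h1; rw [b0] at h1'; rw [a1] at h2; rw [b1] at h2'
  have e0 : (Q 0).2 = (Q' 0).2 := Ik_inj h1 h1'
  have e1 : (Q 1).2 = (Q' 1).2 := Ik_inj h2 h2'
  funext i
  fin_cases i
  · show Q 0 = Q' 0
    exact Prod.ext (by rw [a0, b0]) e0
  · show Q 1 = Q' 1
    exact Prod.ext (by rw [a1, b1]) e1

lemma abs_fk_le_one (α : (Fin 2 → ℕ × ℕ) → ℝ) (n k : ℕ) (x : Fin 2 → ℝ) :
    |fk α n k x| ≤ 1 := by
  rw [fk]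
  by_cases hex : ∃ Q ∈ Fk n k, haarRect 2 Q x ≠ 0
  · obtain ⟨Q0, hQ0, hne⟩ := hex
    rw [Finset.sum_eq_single_of_mem Q0 hQ0 ?_]
    · rw [abs_mul, abs_sgn, one_mul]
      exact abs_haarRect_le_one Q0 x
    · intro Q hQ hQne
      by_cases hz : haarRect 2 Q x = 0
      · rw [hz, mul_zero]
      · exact absurd (haarRect_eq_of_ne_zero hQ hQ0 hz hne) hQne
  · push_neg at hex
    rw [Finset.sum_eq_zero fun Q hQ => by rw [hex Q hQ, mul_zero]]
    norm_num

lemma Psi_nonneg (α : (Fin 2 → ℕ × ℕ) → ℝ) (n : ℕ) (x : Fin 2 → ℝ) : 0 ≤ Psi α n x := by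
  rw [Psi]
  apply Finset.prod_nonneg
  intro k _
  have := (abs_le.1 (abs_fk_le_one α n k x)).1
  linarith

lemma measurable_Psi (α : (Fin 2 → ℕ × ℕ) → ℝ) (n : ℕ) : Measurable (Psi α n) := by
  apply Finset.measurable_prod
  intro k _
  exact (measurable_fk α n k).add measurable_const

lemma abs_Psi_le (α : (Fin 2 → ℕ × ℕ) → ℝ) (n : ℕ) (x : Fin 2 → ℝ) :
    |Psi α n x| ≤ 2 ^ (n + 1) := by
  rw [Psi, Finset.abs_prod]
  calc ∏ k ∈ Finset.range (n + 1), |fk α n k x + 1|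
      ≤ ∏ k ∈ Finset.range (n + 1), 2 := by
        apply Finset.prod_le_prod (fun k _ => abs_nonneg _)
        intro k _
        have h := abs_le.1 (abs_fk_le_one α n k x)
        rw [abs_le]
        constructor <;> linarith [h.1, h.2]
  _ = 2 ^ (n + 1) := by rw [Finset.prod_const, Finset.card_range]

/-- Constancy in the first coordinate. -/
lemma fk_const_left (α : (Fin 2 → ℕ × ℕ) → ℝ) {n k K : ℕ} (hk : k < K) (j : ℕ) (y : ℝ)
    {x : ℝ} (hx : x ∈ Ik K j) : fk α n k ![x, y] = fk α n k ![(j : ℝ) / 2 ^ K, y] := by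
  rw [fk_apply, fk_apply]
  apply Finset.sum_congr rfl
  intro Q _
  simp only [Matrix.cons_val_zero, Matrix.cons_val_one, Matrix.head_cons]
  rw [haar_const hk j (Q 0).2 hx]

/-- Constancy in the second coordinate. -/
lemma fk_const_right (α : (Fin 2 → ℕ × ℕ) → ℝ) {n k K : ℕ} (hk : n - k < K) (j : ℕ) (x : ℝ)
    {y : ℝ} (hy : y ∈ Ik K j) : fk α n k ![x, y] = fk α n k ![x, (j : ℝ) / 2 ^ K] := by
  rw [fk_apply, fk_apply]
  apply Finset.sum_congr rfl
  intro Q _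
  simp only [Matrix.cons_val_zero, Matrix.cons_val_one, Matrix.head_cons]
  rw [haar_const hk j (Q 1).2 hy]

end FkLemmas

section Kill

lemma abs_prodfk_le_one (α : (Fin 2 → ℕ × ℕ) → ℝ) (n : ℕ) (S : Finset ℕ) (x : Fin 2 → ℝ) :
    |∏ k ∈ S, fk α n k x| ≤ 1 := by
  rw [Finset.abs_prod]
  exact Finset.prod_le_one (fun k _ => abs_nonneg _) (fun k _ => abs_fk_le_one α n k x)

lemma measurable_unpair : Measurable (fun z : ℝ × ℝ => (![z.1, z.2] : Fin 2 → ℝ)) := by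
  apply measurable_pi_lambda
  intro i
  fin_cases i
  · exact measurable_fst
  · exact measurable_snd

lemma kill_aux_integrable {w0 w1 : ℝ → ℝ} (m0 : Measurable w0) (m1 : Measurable w1)
    {C0 C1 : ℝ} (b0 : ∀ x, |w0 x| ≤ C0) (b1 : ∀ x, |w1 x| ≤ C1)
    (α : (Fin 2 → ℕ × ℕ) → ℝ) (n : ℕ) (S : Finset ℕ) :
    Integrable (fun z : ℝ × ℝ =>
      (w0 (![z.1, z.2] 0) * w1 (![z.1, z.2] 1)) * ∏ k ∈ S, fk α n k ![z.1, z.2])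
      (ν.prod ν) := by
  have hC0 : 0 ≤ C0 := le_trans (abs_nonneg _) (b0 0)
  have hC1 : 0 ≤ C1 := le_trans (abs_nonneg _) (b1 0)
  have hmeas : Measurable (fun x : Fin 2 → ℝ =>
      (w0 (x 0) * w1 (x 1)) * ∏ k ∈ S, fk α n k x) := by
    exact ((m0.comp (measurable_pi_apply 0)).mul (m1.comp (measurable_pi_apply 1))).mul
      (Finset.measurable_prod _ fun k _ => measurable_fk α n k)
  apply (integrable_const (C0 * C1 * 1)).mono'
    ((hmeas.comp measurable_unpair).aestronglyMeasurable)
  apply Filter.Eventually.of_forall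
  intro z
  simp only [Function.comp]
  rw [Real.norm_eq_abs, abs_mul, abs_mul]
  apply mul_le_mul ?_ (abs_prodfk_le_one α n S _) (abs_nonneg _) (by positivity)
  exact mul_le_mul (b0 _) (b1 _) (abs_nonneg _) hC0

/-- Kill lemma, first coordinate: if the largest first-coordinate scale appears only once. -/
lemma kill_x (α : (Fin 2 → ℕ × ℕ) → ℝ) {n : ℕ} (S : Finset ℕ) (hS : S.Nonempty)
    (w0 w1 : ℝ → ℝ) (m0 : Measurable w0) (m1 : Measurable w1) {C0 C1 : ℝ}
    (b0 : ∀ x, |w0 x| ≤ C0) (b1 : ∀ x, |w1 x| ≤ C1)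
    (hw0 : ∀ j : ℕ, ∀ x ∈ Ik (S.max' hS) j, w0 x = w0 ((j : ℝ) / 2 ^ (S.max' hS))) :
    ∫ x, (w0 (x 0) * w1 (x 1)) * ∏ k ∈ S, fk α n k x ∂(μcube 2) = 0 := by
  have hC0 : 0 ≤ C0 := le_trans (abs_nonneg _) (b0 0)
  set M := S.max' hS with hM
  rw [integral_cube]
  rw [integral_prod_symm _ (kill_aux_integrable m0 m1 b0 b1 α n S)]
  have inner0 : ∀ y : ℝ, (∫ x, (w0 (![x, y] 0) * w1 (![x, y] 1)) *
      ∏ k ∈ S, fk α n k ![x, y] ∂ν) = 0 := by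
    intro y
    have h1 : ∀ x : ℝ, (w0 (![x, y] 0) * w1 (![x, y] 1)) * ∏ k ∈ S, fk α n k ![x, y]
        = (∑ Q ∈ Fk n M, (sgn α Q * haar (n - M) (Q 1).2 y) * haar M (Q 0).2 x) *
          (w0 x * w1 y * ∏ k ∈ S.erase M, fk α n k ![x, y]) := by
      intro x
      simp only [Matrix.cons_val_zero, Matrix.cons_val_one, Matrix.head_cons]
      rw [← Finset.mul_prod_erase S _ (S.max'_mem hS), ← hM, fk_apply]
      simp only [Matrix.cons_val_zero, Matrix.cons_val_one, Matrix.head_cons]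
      rw [Finset.sum_mul, Finset.sum_mul, Finset.mul_sum]
      apply Finset.sum_congr rfl
      intro Q _
      ring
    rw [show (fun x => (w0 (![x, y] 0) * w1 (![x, y] 1)) * ∏ k ∈ S, fk α n k ![x, y])
        = fun x => (∑ Q ∈ Fk n M, (sgn α Q * haar (n - M) (Q 1).2 y) * haar M (Q 0).2 x) *
          (w0 x * w1 y * ∏ k ∈ S.erase M, fk α n k ![x, y]) from funext h1]
    apply SL (Fk n M) _ _ M (fun Q hQ => ((mem_Fk hQ).2.2.2.1))
      _ ?_ (C0 * |w1 y| * 1) ?_ ?_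
    · exact (m0.mul measurable_const).mul
        (Finset.measurable_prod _ fun k _ => (measurable_fk α n k).comp (measurable_pair_left y))
    · intro x
      rw [abs_mul, abs_mul]
      apply mul_le_mul ?_ (abs_prodfk_le_one α n _ _) (abs_nonneg _) (by positivity)
      exact mul_le_mul_of_nonneg_right (b0 x) (abs_nonneg _)
    · intro Q hQ x hx
      rw [hw0 _ x hx]
      congr 1
      apply Finset.prod_congr rfl
      intro k hk
      have hkM : k < M := by
        have h1 := Finset.ne_of_mem_erase hk
        have h2 := S.le_max' k (Finset.mem_of_mem_erase hk)
        omega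
      exact fk_const_left α hkM _ y hx
  simp only [inner0, integral_zero]

/-- Kill lemma, second coordinate: if the largest second-coordinate scale appears only once. -/
lemma kill_y (α : (Fin 2 → ℕ × ℕ) → ℝ) {n : ℕ} (S : Finset ℕ) (hS : S.Nonempty)
    (hSn : ∀ k ∈ S, k ≤ n)
    (w0 w1 : ℝ → ℝ) (m0 : Measurable w0) (m1 : Measurable w1) {C0 C1 : ℝ}
    (b0 : ∀ x, |w0 x| ≤ C0) (b1 : ∀ x, |w1 x| ≤ C1)
    (hw1 : ∀ j : ℕ, ∀ y ∈ Ik (n - S.min' hS) j, w1 y = w1 ((j : ℝ) / 2 ^ (n - S.min' hS))) :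
    ∫ x, (w0 (x 0) * w1 (x 1)) * ∏ k ∈ S, fk α n k x ∂(μcube 2) = 0 := by
  have hC1 : 0 ≤ C1 := le_trans (abs_nonneg _) (b1 0)
  set m := S.min' hS with hm
  rw [integral_cube]
  rw [integral_prod _ (kill_aux_integrable m0 m1 b0 b1 α n S)]
  have inner0 : ∀ x : ℝ, (∫ y, (w0 (![x, y] 0) * w1 (![x, y] 1)) *
      ∏ k ∈ S, fk α n k ![x, y] ∂ν) = 0 := by
    intro x
    have h1 : ∀ y : ℝ, (w0 (![x, y] 0) * w1 (![x, y] 1)) * ∏ k ∈ S, fk α n k ![x, y]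
        = (∑ Q ∈ Fk n m, (sgn α Q * haar m (Q 0).2 x) * haar (n - m) (Q 1).2 y) *
          (w0 x * w1 y * ∏ k ∈ S.erase m, fk α n k ![x, y]) := by
      intro y
      simp only [Matrix.cons_val_zero, Matrix.cons_val_one, Matrix.head_cons]
      rw [← Finset.mul_prod_erase S _ (S.min'_mem hS), ← hm, fk_apply]
      simp only [Matrix.cons_val_zero, Matrix.cons_val_one, Matrix.head_cons]
      rw [Finset.sum_mul, Finset.sum_mul, Finset.mul_sum]
      apply Finset.sum_congr rfl
      intro Q _
      ring
    rw [show (fun y => (w0 (![x, y] 0) * w1 (![x, y] 1)) * ∏ k ∈ S, fk α n k ![x, y])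
        = fun y => (∑ Q ∈ Fk n m, (sgn α Q * haar m (Q 0).2 x) * haar (n - m) (Q 1).2 y) *
          (w0 x * w1 y * ∏ k ∈ S.erase m, fk α n k ![x, y]) from funext h1]
    apply SL (Fk n m) _ _ (n - m) (fun Q hQ => ((mem_Fk hQ).2.2.2.2))
      _ ?_ (|w0 x| * C1 * 1) ?_ ?_
    · exact (measurable_const.mul m1).mul
        (Finset.measurable_prod _ fun k _ => (measurable_fk α n k).comp (measurable_pair_right x))
    · intro y
      rw [abs_mul, abs_mul]
      apply mul_le_mul ?_ (abs_prodfk_le_one α n _ _) (abs_nonneg _) (by positivity)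
      exact mul_le_mul_of_nonneg_left (b1 y) (abs_nonneg _)
    · intro Q hQ y hy
      rw [hw1 _ y hy]
      congr 1
      apply Finset.prod_congr rfl
      intro k hk
      have hkm : n - k < n - m := by
        have h1 := Finset.ne_of_mem_erase hk
        have h2 := S.min'_le k (Finset.mem_of_mem_erase hk)
        have h3 := hSn k (Finset.mem_of_mem_erase hk)
        have h4 := hSn m (S.min'_mem hS)
        omega
      exact fk_const_right α hkm _ x hy
  simp only [inner0, integral_zero]

end Kill

section Veq

lemma abs_haar_mul_le_one (k j k' j' : ℕ) (u : ℝ) : |haar k j u * haar k' j' u| ≤ 1 := by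
  rw [abs_mul]
  exact mul_le_one₀ (abs_haar_le_one _ _ _) (abs_nonneg _) (abs_haar_le_one _ _ _)

/-- The diagonal computation: `∫ h_R f_{a}` where `a` is the first scale of `R`. -/
lemma diag (α : (Fin 2 → ℕ × ℕ) → ℝ) {n : ℕ} {R : Fin 2 → ℕ × ℕ}
    (hR : R ∈ dyadicRectsGe 2 n) :
    ∫ x, haarRect 2 R x * fk α n (R 0).1 x ∂(μcube 2) =
      if (R 0).1 + (R 1).1 = n then sgn α R * ((2:ℝ) ^ n)⁻¹ else 0 := by
  obtain ⟨hab, hja, hjb⟩ := mem_Ge hR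
  have h1 : (fun x : Fin 2 → ℝ => haarRect 2 R x * fk α n (R 0).1 x) =
      fun x => ∑ Q ∈ Fk n (R 0).1, sgn α Q *
        ((haar (R 0).1 (R 0).2 (x 0) * haar (R 0).1 (Q 0).2 (x 0)) *
         (haar (R 1).1 (R 1).2 (x 1) * haar (n - (R 0).1) (Q 1).2 (x 1))) := by
    funext x
    rw [haarRect_two, fk_apply, Finset.mul_sum]
    apply Finset.sum_congr rfl
    intro Q _
    ring
  rw [h1, integral_finset_sum]
  swap
  · intro Q _
    apply integrable_mucube (C := 1)
    · apply Measurable.const_mul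
      exact (((measurable_haar _ _).comp (measurable_pi_apply 0)).mul
        ((measurable_haar _ _).comp (measurable_pi_apply 0))).mul
        (((measurable_haar _ _).comp (measurable_pi_apply 1)).mul
        ((measurable_haar _ _).comp (measurable_pi_apply 1)))
    · intro x
      rw [abs_mul, abs_sgn, one_mul, abs_mul]
      exact mul_le_one₀ (abs_haar_mul_le_one _ _ _ _ _) (abs_nonneg _)
        (abs_haar_mul_le_one _ _ _ _ _)
  have hQval : ∀ Q ∈ Fk n (R 0).1,
      ∫ x, sgn α Q * ((haar (R 0).1 (R 0).2 (x 0) * haar (R 0).1 (Q 0).2 (x 0)) *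
        (haar (R 1).1 (R 1).2 (x 1) * haar (n - (R 0).1) (Q 1).2 (x 1))) ∂(μcube 2)
      = sgn α Q * ((if (R 0).2 = (Q 0).2 then ((2:ℝ) ^ (R 0).1)⁻¹ else 0) *
          (∫ y, haar (R 1).1 (R 1).2 y * haar (n - (R 0).1) (Q 1).2 y ∂ν)) := by
    intro Q hQ
    rw [integral_const_mul,
      integral_cube_mul (fun u => haar (R 0).1 (R 0).2 u * haar (R 0).1 (Q 0).2 u)
        (fun u => haar (R 1).1 (R 1).2 u * haar (n - (R 0).1) (Q 1).2 u),
      integral_haar_mul _ hja (mem_Fk hQ).2.2.2.1]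
  rw [Finset.sum_congr rfl hQval]
  by_cases hab' : (R 0).1 + (R 1).1 = n
  · rw [if_pos hab']
    have hb : (R 1).1 = n - (R 0).1 := by omega
    have hjb' : (R 1).2 < 2 ^ (n - (R 0).1) := by rw [← hb]; exact hjb
    have hRmem : R ∈ Fk n (R 0).1 := mem_Fk_of_Ge hR hab'
    rw [Finset.sum_eq_single_of_mem R hRmem]
    · rw [if_pos rfl]
      have : ∫ y, haar (R 1).1 (R 1).2 y * haar (n - (R 0).1) (R 1).2 y ∂ν
          = ((2:ℝ) ^ (n - (R 0).1))⁻¹ := by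
        rw [hb, integral_haar_mul _ hjb' hjb', if_pos rfl]
      rw [this, ← mul_inv, ← pow_add]
      congr 3
      omega
    · intro Q hQ hQne
      obtain ⟨q0, q1, -, -, hq2⟩ := mem_Fk hQ
      by_cases h0 : (R 0).2 = (Q 0).2
      · rw [hb, integral_haar_mul _ hjb' hq2]
        by_cases h1 : (R 1).2 = (Q 1).2
        · exfalso
          apply hQne
          funext i
          fin_cases i
          · show Q 0 = R 0
            exact Prod.ext (by rw [q0]) h0.symm
          · show Q 1 = R 1
            exact Prod.ext (by rw [q1, hb]) h1.symm
        · rw [if_neg h1, mul_zero, mul_zero]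
      · rw [if_neg h0, zero_mul, mul_zero]
  · rw [if_neg hab']
    apply Finset.sum_eq_zero
    intro Q hQ
    have hblt : (R 1).1 < n - (R 0).1 := by omega
    rw [integral_haar_mul_cross hblt _ (mem_Fk hQ).2.2.2.2, mul_zero, mul_zero]

/-- The value of `∫ h_R ∏_{k ∈ S} f_k`. -/
lemma V_eq (α : (Fin 2 → ℕ × ℕ) → ℝ) {n : ℕ} {R : Fin 2 → ℕ × ℕ}
    (hR : R ∈ dyadicRectsGe 2 n) (S : Finset ℕ) (hSr : S ⊆ Finset.range (n + 1)) :
    ∫ x, haarRect 2 R x * ∏ k ∈ S, fk α n k x ∂(μcube 2) =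
      if S = {(R 0).1} ∧ (R 0).1 + (R 1).1 = n then sgn α R * ((2:ℝ) ^ n)⁻¹ else 0 := by
  obtain ⟨hab, hja, hjb⟩ := mem_Ge hR
  by_cases hSa : S = {(R 0).1}
  · simp only [hSa, Finset.prod_singleton, true_and]
    exact diag α hR
  · rw [if_neg (by tauto)]
    rcases Finset.eq_empty_or_nonempty S with hE | hne
    · subst hE
      simp only [Finset.prod_empty, mul_one]
      rw [show (fun x : Fin 2 → ℝ => haarRect 2 R x)
          = fun x => haar (R 0).1 (R 0).2 (x 0) * haar (R 1).1 (R 1).2 (x 1)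
          from funext (haarRect_two R)]
      rw [integral_cube_mul (haar (R 0).1 (R 0).2) (haar (R 1).1 (R 1).2),
        integral_haar _ _ hja, zero_mul]
    · have hSn : ∀ k ∈ S, k ≤ n := by
        intro k hk
        have := hSr hk
        rw [Finset.mem_range] at this
        omega
      rw [show (fun x : Fin 2 → ℝ => haarRect 2 R x * ∏ k ∈ S, fk α n k x)
          = fun x => (haar (R 0).1 (R 0).2 (x 0) * haar (R 1).1 (R 1).2 (x 1)) *
              ∏ k ∈ S, fk α n k x
          from funext fun x => by rw [haarRect_two]]
      by_cases hlt : (R 0).1 < S.max' hne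
      · exact kill_x α S hne _ _ (measurable_haar _ _) (measurable_haar _ _)
          (C0 := 1) (C1 := 1) (abs_haar_le_one _ _) (abs_haar_le_one _ _)
          (fun j x hx => haar_const hlt j (R 0).2 hx)
      · have hmn : S.min' hne ≤ n := hSn _ (S.min'_mem hne)
        have hm_lt : S.min' hne < (R 0).1 := by
          by_contra hcon
          push_neg at hcon
          have h1 := S.min'_le _ (S.max'_mem hne)
          have h2 : S.max' hne ≤ (R 0).1 := not_lt.1 hlt
          apply hSa
          apply Finset.eq_singleton_iff_unique_mem.mpr
          constructor
          · have : S.min' hne = (R 0).1 := le_antisymm (le_trans h1 h2) hcon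
            rw [← this]
            exact S.min'_mem hne
          · intro x hx
            have := S.min'_le x hx
            have := S.le_max' x hx
            omega
        have hblt : (R 1).1 < n - S.min' hne := by omega
        exact kill_y α S hne hSn _ _ (measurable_haar _ _) (measurable_haar _ _)
          (C0 := 1) (C1 := 1) (abs_haar_le_one _ _) (abs_haar_le_one _ _)
          (fun j y hy => haar_const hblt j (R 1).2 hy)

end Veq

section Main

lemma Psi_expand (α : (Fin 2 → ℕ × ℕ) → ℝ) (n : ℕ) (x : Fin 2 → ℝ) :
    Psi α n x = ∑ S ∈ (Finset.range (n + 1)).powerset, ∏ k ∈ S, fk α n k x := by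
  rw [Psi, Finset.prod_add]
  simp

lemma mucube_univ : (μcube 2) Set.univ = 1 := by
  rw [μcube, Measure.restrict_apply_univ, cube, volume_pi_pi]
  simp [Real.volume_Icc]

/-- The Riesz product has integral one. -/
lemma int_Psi (α : (Fin 2 → ℕ × ℕ) → ℝ) (n : ℕ) : ∫ x, Psi α n x ∂(μcube 2) = 1 := by
  rw [show (fun x => Psi α n x) = fun x =>
      ∑ S ∈ (Finset.range (n + 1)).powerset, ∏ k ∈ S, fk α n k x
      from funext (Psi_expand α n)]
  rw [integral_finset_sum]
  swap
  · intro S _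
    apply integrable_mucube (C := 1)
    · exact Finset.measurable_prod _ fun k _ => measurable_fk α n k
    · exact abs_prodfk_le_one α n S
  have hval : ∀ S ∈ (Finset.range (n + 1)).powerset,
      (∫ x, ∏ k ∈ S, fk α n k x ∂(μcube 2)) = if S = ∅ then 1 else 0 := by
    intro S _
    by_cases hE : S = ∅
    · subst hE
      simp only [Finset.prod_empty, if_pos]
      rw [integral_const, measureReal_def, mucube_univ]
      simp
    · rw [if_neg hE]
      have hne : S.Nonempty := Finset.nonempty_iff_ne_empty.2 hE
      have := kill_x α (n := n) S hne (fun _ => (1:ℝ)) (fun _ => (1:ℝ)) measurable_const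
        measurable_const (C0 := 1) (C1 := 1) (fun _ => by norm_num) (fun _ => by norm_num)
        (fun j x _ => rfl)
      simpa using this
  rw [Finset.sum_congr rfl hval,
    Finset.sum_eq_single_of_mem ∅ (Finset.empty_mem_powerset _)]
  · rw [if_pos rfl]
  · intro S _ hne
    rw [if_neg hne]

/-- The integral of `h_R` against the Riesz product. -/
lemma T_eq (α : (Fin 2 → ℕ × ℕ) → ℝ) {n : ℕ} {R : Fin 2 → ℕ × ℕ}
    (hR : R ∈ dyadicRectsGe 2 n) :
    ∫ x, haarRect 2 R x * Psi α n x ∂(μcube 2) =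
      if (R 0).1 + (R 1).1 = n then sgn α R * ((2:ℝ) ^ n)⁻¹ else 0 := by
  rw [show (fun x => haarRect 2 R x * Psi α n x) = fun x =>
      ∑ S ∈ (Finset.range (n + 1)).powerset, haarRect 2 R x * ∏ k ∈ S, fk α n k x
      from funext fun x => by rw [Psi_expand, Finset.mul_sum]]
  rw [integral_finset_sum]
  swap
  · intro S _
    apply integrable_mucube (C := 1)
    · exact (measurable_haarRect R).mul (Finset.measurable_prod _ fun k _ => measurable_fk α n k)
    · intro x
      rw [abs_mul]
      exact mul_le_one₀ (abs_haarRect_le_one R x) (abs_nonneg _) (abs_prodfk_le_one α n S x)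
  rw [Finset.sum_congr rfl (fun S hS => V_eq α hR S (Finset.mem_powerset.1 hS))]
  by_cases hab : (R 0).1 + (R 1).1 = n
  · rw [if_pos hab]
    have hmem : ({(R 0).1} : Finset ℕ) ∈ (Finset.range (n + 1)).powerset := by
      rw [Finset.mem_powerset, Finset.singleton_subset_iff, Finset.mem_range]
      omega
    rw [Finset.sum_eq_single_of_mem _ hmem]
    · rw [if_pos ⟨rfl, hab⟩]
    · intro S _ hne
      rw [if_neg (fun h => hne h.1)]
  · rw [if_neg hab]
    apply Finset.sum_eq_zero
    intro S _
    rw [if_neg (fun h => hab h.2)]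

/-- The main identity: the Riesz product extracts the coefficients. -/
lemma int_F_Psi (α : (Fin 2 → ℕ × ℕ) → ℝ) (n : ℕ) :
    ∫ x, (∑ R ∈ dyadicRectsGe 2 n, α R * haarRect 2 R x) * Psi α n x ∂(μcube 2)
      = ((2:ℝ) ^ n)⁻¹ * ∑ R ∈ dyadicRects 2 n, |α R| := by
  rw [show (fun x => (∑ R ∈ dyadicRectsGe 2 n, α R * haarRect 2 R x) * Psi α n x)
      = fun x => ∑ R ∈ dyadicRectsGe 2 n, α R * (haarRect 2 R x * Psi α n x)
      from funext (fun x => by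
        rw [Finset.sum_mul]
        exact Finset.sum_congr rfl (fun R _ => by ring))]
  rw [integral_finset_sum]
  swap
  · intro R _
    apply integrable_mucube (C := |α R| * 2 ^ (n + 1))
    · exact ((measurable_haarRect R).mul (measurable_Psi α n)).const_mul _
    · intro x
      rw [abs_mul, abs_mul]
      apply mul_le_mul_of_nonneg_left ?_ (abs_nonneg _)
      calc |haarRect 2 R x| * |Psi α n x| ≤ 1 * 2 ^ (n + 1) :=
        mul_le_mul (abs_haarRect_le_one R x) (abs_Psi_le α n x) (abs_nonneg _) one_pos.le
      _ = 2 ^ (n + 1) := one_mul _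
  rw [Finset.sum_congr rfl (fun R hR => by rw [integral_const_mul, T_eq α hR])]
  rw [Finset.sum_congr rfl (fun R _ => (mul_ite _ _ _ _).trans (by rw [mul_zero]))]
  rw [← Finset.sum_filter, filter_Ge_eq]
  rw [Finset.sum_congr rfl (fun R _ => by rw [← mul_assoc, mul_sgn])]
  rw [← Finset.sum_mul, mul_comm]

/-- Talagrand's theorem (two-dimensional Small Ball inequality): there is `C < ∞` so that
for all `n ≥ 1` and all coefficients `α` indexed by dyadic rectangles in `[0,1]²`,
`2^(-n) ∑_{|R|=2^(-n)} |α R| ≤ C ‖∑_{|R| ≥ 2^(-n)} α R h_R‖_∞`. -/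
theorem talagrand_two_dimensions :
    ∃ C : ℝ, 0 < C ∧
      ∀ n : ℕ, 1 ≤ n → ∀ α : (Fin 2 → ℕ × ℕ) → ℝ,
        ENNReal.ofReal ((2 : ℝ) ^ (-(n : ℝ)) * ∑ R ∈ dyadicRects 2 n, |α R|) ≤
          ENNReal.ofReal C *
            eLpNorm (fun x => ∑ R ∈ dyadicRectsGe 2 n, α R * haarRect 2 R x) ⊤ (μcube 2) := by
  refine ⟨1, one_pos, fun n _ α => ?_⟩
  rw [ENNReal.ofReal_one, one_mul]
  set F : (Fin 2 → ℝ) → ℝ := fun x => ∑ R ∈ dyadicRectsGe 2 n, α R * haarRect 2 R x with hF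
  by_cases hE : eLpNorm F ⊤ (μcube 2) = ⊤
  · rw [hE]
    exact le_top
  · have hrpow : (2 : ℝ) ^ (-(n : ℝ)) = ((2:ℝ) ^ n)⁻¹ := by
      rw [Real.rpow_neg (by norm_num : (0:ℝ) ≤ 2), Real.rpow_natCast]
    set M : ℝ := (eLpNorm F ⊤ (μcube 2)).toReal with hM
    have haeF : ∀ᵐ x ∂(μcube 2), |F x| ≤ M := by
      have h := ae_le_eLpNormEssSup (f := F) (μ := μcube 2)
      rw [eLpNorm_exponent_top] at hE
      filter_upwards [h] with x hx
      have := ENNReal.toReal_mono hE hx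
      rw [toReal_enorm, Real.norm_eq_abs] at this
      rw [hM, eLpNorm_exponent_top]
      exact this
    have hBF : ∀ x, |F x| ≤ ∑ R ∈ dyadicRectsGe 2 n, |α R| := by
      intro x
      rw [hF]
      calc |∑ R ∈ dyadicRectsGe 2 n, α R * haarRect 2 R x|
          ≤ ∑ R ∈ dyadicRectsGe 2 n, |α R * haarRect 2 R x| :=
            Finset.abs_sum_le_sum_abs _ _
      _ ≤ ∑ R ∈ dyadicRectsGe 2 n, |α R| := by
          apply Finset.sum_le_sum
          intro R _
          rw [abs_mul]
          calc |α R| * |haarRect 2 R x| ≤ |α R| * 1 :=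
            mul_le_mul_of_nonneg_left (abs_haarRect_le_one R x) (abs_nonneg _)
          _ = |α R| := mul_one _
    have hmF : Measurable F :=
      Finset.measurable_sum _ fun R _ => (measurable_haarRect R).const_mul _
    have hintFP : Integrable (fun x => F x * Psi α n x) (μcube 2) := by
      apply integrable_mucube (C := (∑ R ∈ dyadicRectsGe 2 n, |α R|) * 2 ^ (n + 1))
      · exact hmF.mul (measurable_Psi α n)
      · intro x
        rw [abs_mul]
        exact mul_le_mul (hBF x) (abs_Psi_le α n x) (abs_nonneg _)
          (le_trans (abs_nonneg _) (hBF x))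
    have hintP : Integrable (fun x => Psi α n x) (μcube 2) :=
      integrable_mucube (measurable_Psi α n) (abs_Psi_le α n)
    have key : ((2:ℝ) ^ n)⁻¹ * ∑ R ∈ dyadicRects 2 n, |α R| ≤ M := by
      rw [← int_F_Psi α n]
      calc ∫ x, F x * Psi α n x ∂(μcube 2) ≤ ∫ x, M * Psi α n x ∂(μcube 2) := by
            apply integral_mono_ae hintFP (hintP.const_mul M)
            filter_upwards [haeF] with x hx
            exact mul_le_mul_of_nonneg_right (le_trans (le_abs_self _) hx) (Psi_nonneg α n x)
      _ = M * ∫ x, Psi α n x ∂(μcube 2) := integral_const_mul M _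
      _ = M := by rw [int_Psi, mul_one]
    calc ENNReal.ofReal ((2 : ℝ) ^ (-(n : ℝ)) * ∑ R ∈ dyadicRects 2 n, |α R|)
        ≤ ENNReal.ofReal M := ENNReal.ofReal_le_ofReal (by rw [hrpow]; exact key)
    _ = eLpNorm F ⊤ (μcube 2) := ENNReal.ofReal_toReal hE

end Main
end

section
/- Let R_1, …, R_k be dyadic rectangles in [0,1]^d such that there is no pair 1 ≤ j < j' ≤ k and no coordinate 1 ≤ t ≤ d for which R_{j,t} = R_{j',t}, and suppose that the intersection S = R_1 ∩ ⋯ ∩ R_k has nonempty interior (so S is itself a dyadic rectangle). Then there is a sign ε ∈ {+1, −1} such that ∏_{j=1}^k h_{R_j} = ε · h_S. -/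
open MeasureTheory

/-- The dyadic interval `[j/2^k, (j+1)/2^k)` as a subset of `ℝ`. -/
def dyadicI (k j : ℕ) : Set ℝ := Set.Ico ((j : ℝ) / 2 ^ k) (((j : ℝ) + 1) / 2 ^ k)

lemma mem_dyadicI_iff {k j : ℕ} {x : ℝ} :
    x ∈ dyadicI k j ↔ (j : ℝ) ≤ x * 2 ^ k ∧ x * 2 ^ k < (j : ℝ) + 1 := by
  have hp : (0:ℝ) < 2 ^ k := by positivity
  simp [dyadicI, Set.mem_Ico, div_le_iff₀ hp, lt_div_iff₀ hp]

lemma haar_eq_zero_of_notMem {k j : ℕ} {x : ℝ} (h : x ∉ dyadicI k j) : haar k j x = 0 := by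
  have hp : (0:ℝ) < 2 ^ k := by positivity
  rw [mem_dyadicI_iff, not_and_or, not_le, not_lt] at h
  unfold haar
  rw [if_neg, if_neg]
  · rintro ⟨h1, h2⟩
    rw [div_le_iff₀ hp] at h1
    rw [lt_div_iff₀ hp] at h2
    rcases h with h | h <;> linarith
  · rintro ⟨h1, h2⟩
    rw [div_le_iff₀ hp] at h1
    rw [lt_div_iff₀ hp] at h2
    rcases h with h | h <;> linarith

/-- Nesting: if two dyadic intervals intersect, the one with bigger level is inside. -/
lemma dyadic_nested {k j k' j' : ℕ} (hkk : k ≤ k') {x : ℝ}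
    (hx : x ∈ dyadicI k j) (hx' : x ∈ dyadicI k' j') :
    j * 2 ^ (k' - k) ≤ j' ∧ j' + 1 ≤ (j + 1) * 2 ^ (k' - k) := by
  obtain ⟨m, rfl⟩ : ∃ m, k' = k + m := ⟨k' - k, (Nat.add_sub_cancel' hkk).symm⟩
  rw [Nat.add_sub_cancel_left]
  rw [mem_dyadicI_iff] at hx hx'
  have hm : (0:ℝ) < 2 ^ m := by positivity
  have e : x * 2 ^ (k + m) = x * 2 ^ k * 2 ^ m := by rw [pow_add]; ring
  rw [e] at hx'
  constructor
  · have h1 : (j:ℝ) * 2 ^ m ≤ x * 2 ^ k * 2 ^ m :=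
      mul_le_mul_of_nonneg_right hx.1 hm.le
    have h2 : ((j * 2 ^ m : ℕ) : ℝ) < ((j' + 1 : ℕ) : ℝ) := by push_cast; linarith [hx'.2]
    have := Nat.cast_lt.mp h2
    omega
  · have h1 : x * 2 ^ k * 2 ^ m < ((j:ℝ) + 1) * 2 ^ m :=
      mul_lt_mul_of_pos_right hx.2 hm
    have h2 : ((j' : ℕ) : ℝ) < (((j + 1) * 2 ^ m : ℕ) : ℝ) := by push_cast; linarith [hx'.1]
    have := Nat.cast_lt.mp h2
    omega

/-- subset from the nat inequalities -/
lemma dyadic_subset {k j m j' : ℕ} (h1 : j * 2 ^ m ≤ j') (h2 : j' + 1 ≤ (j + 1) * 2 ^ m) :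
    dyadicI (k + m) j' ⊆ dyadicI k j := by
  intro y hy
  rw [mem_dyadicI_iff] at hy ⊢
  have hm : (0:ℝ) < 2 ^ m := by positivity
  have e : y * 2 ^ (k + m) = y * 2 ^ k * 2 ^ m := by rw [pow_add]; ring
  rw [e] at hy
  have c1 : ((j:ℝ)) * 2 ^ m ≤ j' := by exact_mod_cast h1
  have c2 : ((j':ℝ) + 1) ≤ ((j:ℝ) + 1) * 2 ^ m := by exact_mod_cast h2
  constructor
  · have : (j:ℝ) * 2 ^ m ≤ y * 2 ^ k * 2 ^ m := by linarith [hy.1]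
    exact le_of_mul_le_mul_right this hm
  · have : y * 2 ^ k * 2 ^ m < ((j:ℝ) + 1) * 2 ^ m := by linarith [hy.2]
    exact lt_of_mul_lt_mul_right this hm.le

/-- Constancy: a dyadic interval strictly finer is in one half; haar of the coarser
interval is constant ±1 on it. -/
lemma haar_const_on {k j m j' : ℕ} (hm1 : 1 ≤ m)
    (h1 : j * 2 ^ m ≤ j') (h2 : j' + 1 ≤ (j + 1) * 2 ^ m) :
    ∃ c : ℝ, (c = 1 ∨ c = -1) ∧ ∀ x ∈ dyadicI (k + m) j', haar k j x = c := by
  obtain ⟨m', rfl⟩ : ∃ m', m = m' + 1 := ⟨m - 1, by omega⟩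
  have hp : (0:ℝ) < 2 ^ k := by positivity
  have hm' : (0:ℝ) < 2 ^ m' := by positivity
  have key : ∀ x ∈ dyadicI (k + (m' + 1)) j',
      ((j':ℝ) / 2 ^ m' ≤ x * 2 ^ (k + 1) ∧ x * 2 ^ (k + 1) < ((j':ℝ) + 1) / 2 ^ m') := by
    intro x hx
    rw [mem_dyadicI_iff] at hx
    have e : x * 2 ^ (k + (m' + 1)) = x * 2 ^ (k + 1) * 2 ^ m' := by
      rw [pow_add, pow_add]; ring
    rw [e] at hx
    constructor
    · rw [div_le_iff₀ hm']; exact hx.1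
    · rw [lt_div_iff₀ hm']; exact hx.2
  by_cases hc : j' + 1 ≤ (2 * j + 1) * 2 ^ m'
  · -- left half, haar = -1
    refine ⟨-1, Or.inr rfl, fun x hx => ?_⟩
    obtain ⟨hx1, hx2⟩ := key x hx
    have c1 : ((j:ℝ)) * 2 ^ (m' + 1) ≤ j' := by exact_mod_cast h1
    have cc : ((j':ℝ) + 1) ≤ (2 * (j:ℝ) + 1) * 2 ^ m' := by exact_mod_cast hc
    have e1 : (2:ℝ) ^ (k + 1) = 2 ^ k * 2 := by rw [pow_add]; ring
    have lo : 2 * (j:ℝ) ≤ x * 2 ^ (k + 1) := by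
      have : (2 * (j:ℝ)) ≤ (j':ℝ) / 2 ^ m' := by
        rw [le_div_iff₀ hm']
        have : ((j:ℝ)) * 2 ^ (m' + 1) = 2 * (j:ℝ) * 2 ^ m' := by ring
        linarith [c1, this ▸ c1]
      linarith
    have hi : x * 2 ^ (k + 1) < 2 * (j:ℝ) + 1 := by
      have : ((j':ℝ) + 1) / 2 ^ m' ≤ 2 * (j:ℝ) + 1 := by
        rw [div_le_iff₀ hm']
        linarith [cc]
      linarith
    unfold haar
    rw [if_pos]
    constructor
    · rw [div_le_iff₀ hp]; nlinarith [lo, e1]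
    · rw [lt_div_iff₀ hp]; nlinarith [hi, e1]
  · -- right half, haar = 1
    push_neg at hc
    have hc' : (2 * j + 1) * 2 ^ m' ≤ j' := by omega
    refine ⟨1, Or.inl rfl, fun x hx => ?_⟩
    obtain ⟨hx1, hx2⟩ := key x hx
    have cc : (2 * (j:ℝ) + 1) * 2 ^ m' ≤ (j':ℝ) := by exact_mod_cast hc'
    have c2 : ((j':ℝ) + 1) ≤ ((j:ℝ) + 1) * 2 ^ (m' + 1) := by exact_mod_cast h2
    have e1 : (2:ℝ) ^ (k + 1) = 2 ^ k * 2 := by rw [pow_add]; ring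
    have lo : 2 * (j:ℝ) + 1 ≤ x * 2 ^ (k + 1) := by
      have : (2 * (j:ℝ) + 1) ≤ (j':ℝ) / 2 ^ m' := by
        rw [le_div_iff₀ hm']; exact cc
      linarith
    have hi : x * 2 ^ (k + 1) < 2 * ((j:ℝ) + 1) := by
      have : ((j':ℝ) + 1) / 2 ^ m' ≤ 2 * ((j:ℝ) + 1) := by
        rw [div_le_iff₀ hm']
        have : ((j:ℝ) + 1) * 2 ^ (m' + 1) = 2 * ((j:ℝ) + 1) * 2 ^ m' := by ring
        linarith [c2, this ▸ c2]
      linarith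
    unfold haar
    rw [if_neg, if_pos]
    · constructor
      · rw [div_le_iff₀ hp]; nlinarith [lo, e1]
      · rw [lt_div_iff₀ hp]; nlinarith [hi, e1]
    · rintro ⟨hh1, hh2⟩
      rw [lt_div_iff₀ hp] at hh2
      nlinarith [lo, e1]

lemma coord_prod {n : ℕ} [NeZero n] (p : Fin n → ℕ × ℕ)
    (hdist : ∀ a b : Fin n, a ≠ b → p a ≠ p b)
    {x0 : ℝ} (hx0 : ∀ a, x0 ∈ dyadicI (p a).1 (p a).2) :
    ∃ a0 : Fin n,
      (∀ a, dyadicI (p a0).1 (p a0).2 ⊆ dyadicI (p a).1 (p a).2) ∧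
      ∃ ε : ℝ, (ε = 1 ∨ ε = -1) ∧
        ∀ x : ℝ, (∏ a, haar (p a).1 (p a).2 x) = ε * haar (p a0).1 (p a0).2 x := by
  obtain ⟨a0, -, hmax⟩ :=
    Finset.exists_max_image Finset.univ (fun a => (p a).1) Finset.univ_nonempty
  -- basic nesting facts for every a ≠ a0
  have hnest : ∀ a : Fin n, a ≠ a0 →
      1 ≤ (p a0).1 - (p a).1 ∧
      (p a).2 * 2 ^ ((p a0).1 - (p a).1) ≤ (p a0).2 ∧
      (p a0).2 + 1 ≤ ((p a).2 + 1) * 2 ^ ((p a0).1 - (p a).1) := by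
    intro a ha
    have hle : (p a).1 ≤ (p a0).1 := hmax a (Finset.mem_univ a)
    obtain ⟨h1, h2⟩ := dyadic_nested hle (hx0 a) (hx0 a0)
    refine ⟨?_, h1, h2⟩
    by_contra hmz
    have hm0 : (p a0).1 - (p a).1 = 0 := by omega
    rw [hm0, pow_zero] at h1 h2
    have : (p a).2 = (p a0).2 := by omega
    have hk1 : (p a).1 = (p a0).1 := by omega
    exact hdist a a0 ha (Prod.ext hk1 this)
  have hsub : ∀ a : Fin n, dyadicI (p a0).1 (p a0).2 ⊆ dyadicI (p a).1 (p a).2 := by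
    intro a
    by_cases ha : a = a0
    · subst ha; exact subset_rfl
    · obtain ⟨-, h1, h2⟩ := hnest a ha
      have e : (p a).1 + ((p a0).1 - (p a).1) = (p a0).1 := by
        have := hmax a (Finset.mem_univ a); omega
      have := dyadic_subset (k := (p a).1) h1 h2
      rwa [e] at this
  have H : ∀ a : Fin n, ∃ c : ℝ, (c = 1 ∨ c = -1) ∧
      (a ≠ a0 → ∀ x ∈ dyadicI (p a0).1 (p a0).2, haar (p a).1 (p a).2 x = c) := by
    intro a
    by_cases ha : a = a0
    · exact ⟨1, Or.inl rfl, fun h => absurd ha h⟩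
    · obtain ⟨hm1, h1, h2⟩ := hnest a ha
      obtain ⟨c, hc1, hc2⟩ := haar_const_on (k := (p a).1) hm1 h1 h2
      have e : (p a).1 + ((p a0).1 - (p a).1) = (p a0).1 := by
        have := hmax a (Finset.mem_univ a); omega
      rw [e] at hc2
      exact ⟨c, hc1, fun _ => hc2⟩
  choose c hc1 hc2 using H
  refine ⟨a0, hsub, ∏ a ∈ Finset.univ.erase a0, c a, ?_, ?_⟩
  · have hsq : (∏ a ∈ Finset.univ.erase a0, c a) * (∏ a ∈ Finset.univ.erase a0, c a) = 1 := by
      rw [← Finset.prod_mul_distrib]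
      exact Finset.prod_eq_one fun a _ => by rcases hc1 a with h | h <;> rw [h] <;> norm_num
    exact mul_self_eq_one_iff.mp hsq
  · intro x
    by_cases hxS : x ∈ dyadicI (p a0).1 (p a0).2
    · rw [← Finset.mul_prod_erase Finset.univ _ (Finset.mem_univ a0)]
      rw [Finset.prod_congr rfl
        (fun a ha => hc2 a (Finset.ne_of_mem_erase ha) x hxS)]
      ring
    · rw [Finset.prod_eq_zero (Finset.mem_univ a0) (haar_eq_zero_of_notMem hxS),
        haar_eq_zero_of_notMem hxS]
      ring

/-- The dyadic rectangle (as a subset of `ℝ^d`) encoded by `R`. -/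
def rectSet (d : ℕ) (R : Fin d → ℕ × ℕ) : Set (Fin d → ℝ) :=
  {x | ∀ i, x i ∈ dyadicI (R i).1 (R i).2}

/-- If `R_1, …, R_k` are dyadic rectangles no two of which share a coordinate interval, and
their intersection has nonempty interior, then the intersection is itself a dyadic rectangle
`S`, and `∏ h_{R_j} = ε h_S` for a sign `ε ∈ {±1}`. -/
theorem product_of_haar_functions (d k : ℕ) (hd : 1 ≤ d) (hk : 1 ≤ k)
    (R : Fin k → Fin d → ℕ × ℕ)
    (hvalid : ∀ j i, (R j i).2 < 2 ^ (R j i).1)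
    (hdistinct : ∀ j j' : Fin k, j ≠ j' → ∀ t : Fin d, R j t ≠ R j' t)
    (hne : (interior (⋂ j, rectSet d (R j))).Nonempty) :
    ∃ S : Fin d → ℕ × ℕ, (∀ i, (S i).2 < 2 ^ (S i).1) ∧
      rectSet d S = ⋂ j, rectSet d (R j) ∧
      ∃ ε : ℝ, (ε = 1 ∨ ε = -1) ∧
        ∀ x : Fin d → ℝ, (∏ j, haarRect d (R j) x) = ε * haarRect d S x := by
  haveI : NeZero k := ⟨by omega⟩
  obtain ⟨x0, hx0⟩ := hne
  have hx0' : x0 ∈ ⋂ j, rectSet d (R j) := interior_subset hx0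
  rw [Set.mem_iInter] at hx0'
  have key : ∀ i : Fin d, ∃ q : ℕ × ℕ, ∃ ε : ℝ,
      ((∃ jj : Fin k, q = R jj i) ∧
        (∀ a, dyadicI q.1 q.2 ⊆ dyadicI (R a i).1 (R a i).2)) ∧
      (ε = 1 ∨ ε = -1) ∧
      ∀ x : ℝ, (∏ a, haar (R a i).1 (R a i).2 x) = ε * haar q.1 q.2 x := by
    intro i
    obtain ⟨a0, hsub, ε, hε1, hε2⟩ :=
      coord_prod (fun a => R a i)
        (fun a b hab => hdistinct a b hab i)
        (x0 := x0 i) (fun a => hx0' a i)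
    exact ⟨R a0 i, ε, ⟨⟨a0, rfl⟩, hsub⟩, hε1, hε2⟩
  choose S ε hq hε1 hε2 using key
  refine ⟨S, ?_, ?_, ∏ i, ε i, ?_, ?_⟩
  · intro i
    obtain ⟨jj, hjj⟩ := (hq i).1
    rw [hjj]; exact hvalid jj i
  · ext x
    simp only [rectSet, Set.mem_setOf_eq, Set.mem_iInter]
    constructor
    · intro h j i
      exact (hq i).2 j (h i)
    · intro h i
      obtain ⟨jj, hjj⟩ := (hq i).1
      rw [hjj]; exact h jj i
  · have hsq : (∏ i, ε i) * (∏ i, ε i) = 1 := by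
      rw [← Finset.prod_mul_distrib]
      exact Finset.prod_eq_one fun i _ => by rcases hε1 i with h | h <;> rw [h] <;> norm_num
    exact mul_self_eq_one_iff.mp hsq
  · intro x
    unfold haarRect
    rw [Finset.prod_comm]
    rw [Finset.prod_congr rfl (fun i _ => hε2 i (x i))]
    rw [Finset.prod_mul_distrib]
end

section
/- Let d ≥ 2, let 𝒜_N be a set of N points in [0,1]^d, and let n be an integer with 2N ≤ 2^n < 4N. There is a constant c_d > 0, depending only on d, such that for every r⃗ ∈ ℍ_n there exist signs ε_R ∈ {+1, −1}, one for each R ∈ 𝓡_{r⃗}, with ∫_{[0,1]^d} D_N(x) · ∑_{R ∈ 𝓡_{r⃗}} ε_R h_R(x) dx ≥ c_d. -/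
open MeasureTheory
open scoped ENNReal

/-- The discrepancy function of a finite point set `A` of cardinality `N` in `[0,1]^d`:
`D_N(x) = #(A ∩ [0,x)) - N x_1 ⋯ x_d`, where `[0,x) = ∏_j [0, x_j)`. -/
noncomputable def discrepancy (d N : ℕ) (A : Finset (Fin d → ℝ)) (x : Fin d → ℝ) : ℝ :=
  ((A.filter fun p => ∀ i, 0 ≤ p i ∧ p i < x i).card : ℝ) - N * ∏ i, x i

/-- `ℍ_n` in dimension `d`: vectors `r⃗ ∈ ℕ^d` with `r_1 + ⋯ + r_d = n`. -/
def Hn (d n : ℕ) : Finset (Fin d → ℕ) :=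
  (Fintype.piFinset fun _ : Fin d => Finset.range (n + 1)).filter fun r => ∑ i, r i = n



lemma haar_eq (k j : ℕ) (x : ℝ) :
    haar k j x =
      (Set.Ico (((j:ℝ) + 1/2)/2^k) (((j:ℝ) + 1)/2^k)).indicator (fun _ => (1:ℝ)) x
      - (Set.Ico ((j:ℝ)/2^k) (((j:ℝ) + 1/2)/2^k)).indicator (fun _ => (1:ℝ)) x := by
  unfold haar
  by_cases h1 : (j : ℝ) / 2 ^ k ≤ x ∧ x < ((j : ℝ) + 1/2) / 2 ^ k <;>
    by_cases h2 : ((j : ℝ) + 1/2) / 2 ^ k ≤ x ∧ x < ((j : ℝ) + 1) / 2 ^ k <;>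
    simp only [Set.indicator_apply, Set.mem_Ico, if_pos, if_neg, h1, h2, if_true, if_false] <;>
    first
      | (exfalso; exact absurd h2.1 (not_le.2 h1.2))
      | norm_num

lemma le_mid (k j : ℕ) : (j:ℝ)/2^k ≤ ((j:ℝ) + 1/2)/2^k := by gcongr <;> norm_num

lemma mid_le (k j : ℕ) : ((j:ℝ) + 1/2)/2^k ≤ ((j:ℝ) + 1)/2^k := by gcongr <;> norm_num

lemma haar_zero_outside {k j : ℕ} {x : ℝ}
    (h : x ∉ Set.Ico ((j:ℝ)/2^k) (((j:ℝ) + 1)/2^k)) : haar k j x = 0 := by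
  have ha := le_mid k j
  have hb := mid_le k j
  rw [Set.mem_Ico, not_and_or, not_le, not_lt] at h
  unfold haar
  split_ifs with h1 h2
  · rcases h with h | h <;> linarith [h1.1, h1.2]
  · rcases h with h | h <;> linarith [h2.1, h2.2]
  · rfl

lemma id_mul_haar_eq (k j : ℕ) :
    (fun t => t * haar k j t) =
      fun t => (Set.Ico (((j:ℝ) + 1/2)/2^k) (((j:ℝ) + 1)/2^k)).indicator (fun s => s) t
        - (Set.Ico ((j:ℝ)/2^k) (((j:ℝ) + 1/2)/2^k)).indicator (fun s => s) t := by
  funext t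
  rw [haar_eq]
  simp only [Set.indicator_apply]
  split_ifs <;> ring

lemma ind_mul_haar_eq (k j : ℕ) (p : ℝ) :
    (fun t => (if p < t then (1:ℝ) else 0) * haar k j t) =
      fun t => (Set.Ioi p ∩ Set.Ico (((j:ℝ) + 1/2)/2^k) (((j:ℝ) + 1)/2^k)).indicator
          (fun _ => (1:ℝ)) t
        - (Set.Ioi p ∩ Set.Ico ((j:ℝ)/2^k) (((j:ℝ) + 1/2)/2^k)).indicator (fun _ => (1:ℝ)) t := by
  funext t
  by_cases hp : p < t
  · rw [if_pos hp, one_mul, haar_eq]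
    simp [Set.indicator_apply, Set.mem_inter_iff, Set.mem_Ioi, hp]
  · rw [if_neg hp, zero_mul]
    simp [Set.indicator_apply, Set.mem_inter_iff, Set.mem_Ioi, hp]

open Set in
lemma integrableOn_indicator_id (c e : ℝ) :
    Integrable ((Set.Ico c e).indicator (fun s : ℝ => s)) := by
  rw [integrable_indicator_iff measurableSet_Ico]
  rcases le_or_gt c e with h | h
  · exact (continuous_id.integrableOn_Icc (a := c) (b := e)).mono_set Set.Ico_subset_Icc_self
  · rw [Set.Ico_eq_empty (not_lt.2 h.le)]
    simp [IntegrableOn]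

lemma integrableOn_indicator_one (S : Set ℝ) (hS : MeasurableSet S) (hfin : volume S < ⊤) :
    Integrable (S.indicator (fun _ : ℝ => (1:ℝ))) := by
  rw [integrable_indicator_iff hS]
  exact integrableOn_const hfin.ne

lemma intOn_id_haar (k j : ℕ) : IntegrableOn (fun t => t * haar k j t) (Set.Icc (0:ℝ) 1) := by
  rw [id_mul_haar_eq]
  exact ((integrableOn_indicator_id _ _).sub (integrableOn_indicator_id _ _)).integrableOn

lemma intOn_ind_haar (k j : ℕ) (p : ℝ) :
    IntegrableOn (fun t => (if p < t then (1:ℝ) else 0) * haar k j t) (Set.Icc (0:ℝ) 1) := by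
  rw [ind_mul_haar_eq]
  refine (Integrable.sub ?_ ?_).integrableOn <;>
    exact integrableOn_indicator_one _ (measurableSet_Ioi.inter measurableSet_Ico)
      (lt_of_le_of_lt (measure_mono Set.inter_subset_right) measure_Ico_lt_top)

lemma Ico_subset_Icc01 {k j : ℕ} (hj : j < 2^k) :
    Set.Ico ((j:ℝ)/2^k) (((j:ℝ) + 1)/2^k) ⊆ Set.Icc (0:ℝ) 1 := by
  have h2k : (0:ℝ) < 2^k := by positivity
  intro t ht
  rcases ht with ⟨h1, h2⟩
  constructor
  · exact le_trans (by positivity) h1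
  · refine le_trans h2.le ?_
    rw [div_le_one h2k]
    have : ((j:ℝ) + 1) ≤ ((2^k : ℕ) : ℝ) := by exact_mod_cast Nat.succ_le_of_lt hj
    simpa using this

lemma indicator_Icc01_noop {k j : ℕ} (hj : j < 2^k) (w : ℝ → ℝ) :
    (Set.Icc (0:ℝ) 1).indicator (fun t => w t * haar k j t) = fun t => w t * haar k j t := by
  funext t
  rw [Set.indicator_apply]
  split_ifs with h
  · rfl
  · rw [haar_zero_outside (fun hmem => h (Ico_subset_Icc01 hj hmem)), mul_zero]

lemma integral_id_haar (k j : ℕ) (hj : j < 2^k) :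
    ∫ t in Set.Icc (0:ℝ) 1, t * haar k j t = (1/4) * (1/4:ℝ)^k := by
  rw [← integral_indicator measurableSet_Icc, indicator_Icc01_noop hj (fun t => t), id_mul_haar_eq]
  rw [integral_sub (integrableOn_indicator_id _ _) (integrableOn_indicator_id _ _),
    integral_indicator measurableSet_Ico, integral_indicator measurableSet_Ico,
    integral_Ico_eq_integral_Ioo, integral_Ico_eq_integral_Ioo,
    ← integral_Ioc_eq_integral_Ioo, ← integral_Ioc_eq_integral_Ioo,
    ← intervalIntegral.integral_of_le (mid_le k j),
    ← intervalIntegral.integral_of_le (le_mid k j),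
    integral_id, integral_id]
  have h2k : (0:ℝ) < 2^k := by positivity
  have h4 : ((2:ℝ)^k)^2 = 4^k := by rw [← pow_mul, mul_comm, pow_mul]; norm_num
  have h14 : ((1:ℝ)/4)^k = 1/4^k := by rw [div_pow, one_pow]
  rw [h14, ← h4]
  field_simp
  ring

lemma vol_Ioi_inter_Ico {p c e : ℝ} (hpc : p ≤ c) (hce : c ≤ e) :
    volume (Set.Ioi p ∩ Set.Ico c e) = ENNReal.ofReal (e - c) := by
  apply le_antisymm
  · calc volume (Set.Ioi p ∩ Set.Ico c e) ≤ volume (Set.Ico c e) :=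
          measure_mono Set.inter_subset_right
      _ = ENNReal.ofReal (e - c) := Real.volume_Ico
  · calc ENNReal.ofReal (e - c) = volume (Set.Ioo c e) := Real.volume_Ioo.symm
      _ ≤ volume (Set.Ioi p ∩ Set.Ico c e) := by
          apply measure_mono
          rintro t ⟨h1, h2⟩
          exact ⟨lt_of_le_of_lt hpc h1, h1.le, h2⟩

lemma integral_ind_haar_outside (k j : ℕ) (p : ℝ) (hj : j < 2^k)
    (hp : p ≤ (j:ℝ)/2^k ∨ ((j:ℝ) + 1)/2^k ≤ p) :
    ∫ t in Set.Icc (0:ℝ) 1, (if p < t then (1:ℝ) else 0) * haar k j t = 0 := by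
  rw [← integral_indicator measurableSet_Icc,
    indicator_Icc01_noop hj (fun t => if p < t then (1:ℝ) else 0), ind_mul_haar_eq]
  have hint : ∀ c e : ℝ, Integrable ((Set.Ioi p ∩ Set.Ico c e).indicator (fun _ : ℝ => (1:ℝ))) :=
    fun c e => integrableOn_indicator_one _ (measurableSet_Ioi.inter measurableSet_Ico)
      (lt_of_le_of_lt (measure_mono Set.inter_subset_right) measure_Ico_lt_top)
  rw [integral_sub (hint _ _) (hint _ _), integral_indicator_const (1:ℝ)
      (measurableSet_Ioi.inter measurableSet_Ico),
    integral_indicator_const (1:ℝ) (measurableSet_Ioi.inter measurableSet_Ico)]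
  have ha := le_mid k j
  have hb := mid_le k j
  rcases hp with hp | hp
  · rw [measureReal_def, measureReal_def, vol_Ioi_inter_Ico (le_trans hp (le_mid k j)) hb, vol_Ioi_inter_Ico hp ha]
    have h2k : (0:ℝ) < 2^k := by positivity
    rw [ENNReal.toReal_ofReal (by linarith), ENNReal.toReal_ofReal (by linarith)]
    simp only [smul_eq_mul, mul_one]
    field_simp
    ring
  · have h1 : Set.Ioi p ∩ Set.Ico (((j:ℝ) + 1/2)/2^k) (((j:ℝ) + 1)/2^k) = ∅ := by
      rw [Set.eq_empty_iff_forall_notMem]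
      rintro t ⟨h1, h2, h3⟩
      rw [Set.mem_Ioi] at h1
      linarith
    have h2 : Set.Ioi p ∩ Set.Ico ((j:ℝ)/2^k) (((j:ℝ) + 1/2)/2^k) = ∅ := by
      rw [Set.eq_empty_iff_forall_notMem]
      rintro t ⟨h1, h2, h3⟩
      rw [Set.mem_Ioi] at h1
      linarith
    rw [h1, h2]
    simp


lemma measurableSet_cube (d : ℕ) : MeasurableSet (cube d) :=
  MeasurableSet.univ_pi fun _ => measurableSet_Icc

lemma indicator_cube_prod {d : ℕ} (g : Fin d → ℝ → ℝ) :
    (cube d).indicator (fun x => ∏ i, g i (x i)) =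
      fun x => ∏ i, (Set.Icc (0:ℝ) 1).indicator (g i) (x i) := by
  classical
  funext x
  rw [Set.indicator_apply]
  split_ifs with h
  · rw [cube, Set.mem_univ_pi] at h
    exact (Finset.prod_congr rfl fun i _ => (Set.indicator_of_mem (h i) _).symm)
  · rw [cube, Set.mem_univ_pi] at h
    push_neg at h
    obtain ⟨i, hi⟩ := h
    exact (Finset.prod_eq_zero (Finset.mem_univ i) (Set.indicator_of_notMem hi _)).symm

lemma integrableOn_prod_cube {d : ℕ} (g : Fin d → ℝ → ℝ)
    (hg : ∀ i, IntegrableOn (g i) (Set.Icc (0:ℝ) 1)) :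
    IntegrableOn (fun x : Fin d → ℝ => ∏ i, g i (x i)) (cube d) := by
  rw [← integrable_indicator_iff (measurableSet_cube d), indicator_cube_prod]
  exact Integrable.fintype_prod (f := fun i => (Set.Icc (0:ℝ) 1).indicator (g i))
    (fun i => (integrable_indicator_iff measurableSet_Icc).2 (hg i))

lemma integral_prod_cube {d : ℕ} (g : Fin d → ℝ → ℝ) :
    ∫ x in cube d, ∏ i, g i (x i) = ∏ i, ∫ t in Set.Icc (0:ℝ) 1, g i t := by
  rw [← integral_indicator (measurableSet_cube d), indicator_cube_prod,
    integral_fintype_prod_volume_eq_prod (fun i => (Set.Icc (0:ℝ) 1).indicator (g i))]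
  exact Finset.prod_congr rfl fun i _ => integral_indicator measurableSet_Icc


lemma disc_mul_haar_eq {d : ℕ} (N : ℕ) (A : Finset (Fin d → ℝ))
    (hA : ∀ q ∈ A, ∀ i, 0 ≤ q i) (r j : Fin d → ℕ) (x : Fin d → ℝ) :
    discrepancy d N A x * ∏ i, haar (r i) (j i) (x i) =
      (∑ p ∈ A, ∏ i, ((if p i < x i then (1:ℝ) else 0) * haar (r i) (j i) (x i)))
        - (N : ℝ) * ∏ i, (x i * haar (r i) (j i) (x i)) := by
  classical
  have hcard : ((A.filter fun p => ∀ i, 0 ≤ p i ∧ p i < x i).card : ℝ)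
      = ∑ p ∈ A, ∏ i, (if p i < x i then (1:ℝ) else 0) := by
    rw [Finset.card_filter]
    push_cast
    refine Finset.sum_congr rfl fun p hp => ?_
    by_cases h : ∀ i, p i < x i
    · rw [if_pos (fun i => ⟨hA p hp i, h i⟩), Finset.prod_eq_one fun i _ => if_pos (h i)]
    · push_neg at h
      obtain ⟨i, hi⟩ := h
      rw [if_neg (fun hc => absurd ((hc i).2) (not_lt.2 hi))]
      exact (Finset.prod_eq_zero (Finset.mem_univ i)
        (if_neg (not_lt.2 hi) : (if p i < x i then (1:ℝ) else 0) = 0)).symm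
  rw [discrepancy, hcard, sub_mul, Finset.sum_mul, mul_assoc, ← Finset.prod_mul_distrib]
  congr 1
  exact Finset.sum_congr rfl fun p _ => (Finset.prod_mul_distrib).symm


lemma disc_haar_integrableOn {d : ℕ} (N : ℕ) (A : Finset (Fin d → ℝ))
    (hA : ∀ q ∈ A, ∀ i, 0 ≤ q i) (r j : Fin d → ℕ) :
    IntegrableOn (fun x => discrepancy d N A x * ∏ i, haar (r i) (j i) (x i)) (cube d) := by
  have heq : (fun x => discrepancy d N A x * ∏ i, haar (r i) (j i) (x i)) =
      fun x => (∑ p ∈ A, ∏ i, ((if p i < x i then (1:ℝ) else 0) * haar (r i) (j i) (x i)))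
        - (N : ℝ) * ∏ i, (x i * haar (r i) (j i) (x i)) :=
    funext (disc_mul_haar_eq N A hA r j)
  have hInt1 : ∀ p : Fin d → ℝ, IntegrableOn
      (fun x : Fin d → ℝ => ∏ i, ((if p i < x i then (1:ℝ) else 0) * haar (r i) (j i) (x i)))
      (cube d) := fun p =>
    integrableOn_prod_cube (fun i t => (if p i < t then (1:ℝ) else 0) * haar (r i) (j i) t)
      (fun i => intOn_ind_haar (r i) (j i) (p i))
  have hInt2 : IntegrableOn (fun x : Fin d → ℝ => ∏ i, (x i * haar (r i) (j i) (x i)))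
      (cube d) :=
    integrableOn_prod_cube (fun i t => t * haar (r i) (j i) t)
      (fun i => intOn_id_haar (r i) (j i))
  have hIntS : IntegrableOn (fun x : Fin d → ℝ =>
      ∑ p ∈ A, ∏ i, ((if p i < x i then (1:ℝ) else 0) * haar (r i) (j i) (x i))) (cube d) :=
    integrable_finset_sum _ (fun p _ => hInt1 p)
  rw [heq]
  exact hIntS.sub (hInt2.const_mul _)

lemma integral_disc_haar {d : ℕ} (N : ℕ) (A : Finset (Fin d → ℝ))
    (hA : ∀ q ∈ A, ∀ i, 0 ≤ q i) (r j : Fin d → ℕ) (hj : ∀ i, j i < 2 ^ r i) :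
    ∫ x in cube d, discrepancy d N A x * ∏ i, haar (r i) (j i) (x i)
      = (∑ p ∈ A, ∏ i, ∫ t in Set.Icc (0:ℝ) 1, (if p i < t then (1:ℝ) else 0) * haar (r i) (j i) t)
        - (N : ℝ) * ((1/4)^d * (1/4:ℝ)^(∑ i, r i)) := by
  have heq : (fun x => discrepancy d N A x * ∏ i, haar (r i) (j i) (x i)) =
      fun x => (∑ p ∈ A, ∏ i, ((if p i < x i then (1:ℝ) else 0) * haar (r i) (j i) (x i)))
        - (N : ℝ) * ∏ i, (x i * haar (r i) (j i) (x i)) :=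
    funext (disc_mul_haar_eq N A hA r j)
  have hInt1 : ∀ p : Fin d → ℝ, IntegrableOn
      (fun x : Fin d → ℝ => ∏ i, ((if p i < x i then (1:ℝ) else 0) * haar (r i) (j i) (x i)))
      (cube d) := fun p =>
    integrableOn_prod_cube (fun i t => (if p i < t then (1:ℝ) else 0) * haar (r i) (j i) t)
      (fun i => intOn_ind_haar (r i) (j i) (p i))
  have hInt2 : IntegrableOn (fun x : Fin d → ℝ => ∏ i, (x i * haar (r i) (j i) (x i)))
      (cube d) :=
    integrableOn_prod_cube (fun i t => t * haar (r i) (j i) t)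
      (fun i => intOn_id_haar (r i) (j i))
  have hIntS : IntegrableOn (fun x : Fin d → ℝ =>
      ∑ p ∈ A, ∏ i, ((if p i < x i then (1:ℝ) else 0) * haar (r i) (j i) (x i))) (cube d) :=
    integrable_finset_sum _ (fun p _ => hInt1 p)
  have hprod1 : ∀ p : Fin d → ℝ,
      (∫ x in cube d, ∏ i, ((if p i < x i then (1:ℝ) else 0) * haar (r i) (j i) (x i)))
        = ∏ i, ∫ t in Set.Icc (0:ℝ) 1, (if p i < t then (1:ℝ) else 0) * haar (r i) (j i) t :=
    fun p => integral_prod_cube (fun i t => (if p i < t then (1:ℝ) else 0) * haar (r i) (j i) t)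
  have hprod2 : (∫ x in cube d, ∏ i, (x i * haar (r i) (j i) (x i)))
      = ∏ i, ∫ t in Set.Icc (0:ℝ) 1, t * haar (r i) (j i) t :=
    integral_prod_cube (fun i t => t * haar (r i) (j i) t)
  rw [heq, integral_sub hIntS (hInt2.const_mul _),
    integral_finset_sum _ (fun p _ => hInt1 p), integral_const_mul]
  congr 1
  · exact Finset.sum_congr rfl fun p _ => hprod1 p
  · rw [hprod2]
    congr 1
    rw [Finset.prod_congr rfl fun i _ => integral_id_haar (r i) (j i) (hj i),
      Finset.prod_mul_distrib, Finset.prod_const, Finset.prod_pow_eq_pow_sum]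
    simp [Finset.card_univ]



/-- For every point set and every `r⃗ ∈ ℍ_n` (with `2N ≤ 2^n < 4N`) there is an r-function
`∑_{R ∈ 𝓡_{r⃗}} ε_R h_R` whose inner product with the discrepancy function is at least a
dimensional constant `c_d > 0`. The rectangles in `𝓡_{r⃗}` are indexed by their positions
`j : Fin d → ℕ` with `j i < 2^(r i)`. -/
theorem rfunction_against_discrepancy (d : ℕ) (hd : 2 ≤ d) :
    ∃ c : ℝ, 0 < c ∧
      ∀ N n : ℕ, ∀ A : Finset (Fin d → ℝ), A.card = N →
        (∀ q ∈ A, ∀ i, q i ∈ Set.Icc (0 : ℝ) 1) →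
        2 * N ≤ 2 ^ n → 2 ^ n < 4 * N →
        ∀ r ∈ Hn d n, ∃ ε : (Fin d → ℕ) → ℝ, (∀ j, ε j = 1 ∨ ε j = -1) ∧
          c ≤ ∫ x in cube d, discrepancy d N A x *
              ∑ j ∈ Fintype.piFinset (fun i => Finset.range (2 ^ r i)),
                ε j * ∏ i, haar (r i) (j i) (x i) := by
  classical
  refine ⟨(1/4)^d * (1/8), by positivity, ?_⟩
  intro N n A hcard hA h2N h4N r hr
  have hA0 : ∀ q ∈ A, ∀ i, 0 ≤ q i := fun q hq i => (hA q hq i).1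
  have hrn : ∑ i, r i = n := (Finset.mem_filter.mp hr).2
  set S := Fintype.piFinset (fun i : Fin d => Finset.range (2 ^ r i)) with hS
  set I : (Fin d → ℕ) → ℝ :=
    fun j => ∫ x in cube d, discrepancy d N A x * ∏ i, haar (r i) (j i) (x i) with hI
  set ε : (Fin d → ℕ) → ℝ := fun j => if 0 ≤ I j then 1 else -1 with hε
  refine ⟨ε, fun j => by by_cases h : 0 ≤ I j <;> simp [hε, h], ?_⟩
  have hmemS : ∀ j ∈ S, ∀ i, j i < 2 ^ r i :=
    fun j hj i => Finset.mem_range.mp (Fintype.mem_piFinset.mp hj i)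
  have hint : ∀ j : Fin d → ℕ,
      IntegrableOn (fun x => discrepancy d N A x * ∏ i, haar (r i) (j i) (x i)) (cube d) :=
    fun j => disc_haar_integrableOn N A hA0 r j
  -- swap integral and sum
  have hswap : (∫ x in cube d, discrepancy d N A x *
      ∑ j ∈ S, ε j * ∏ i, haar (r i) (j i) (x i)) = ∑ j ∈ S, ε j * I j := by
    have h1 : (fun x => discrepancy d N A x * ∑ j ∈ S, ε j * ∏ i, haar (r i) (j i) (x i))
        = fun x => ∑ j ∈ S, ε j * (discrepancy d N A x * ∏ i, haar (r i) (j i) (x i)) := by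
      funext x
      rw [Finset.mul_sum]
      exact Finset.sum_congr rfl fun j _ => by ring
    rw [h1, integral_finset_sum _ fun j _ => ((hint j).const_mul (ε j))]
    exact Finset.sum_congr rfl fun j _ => integral_const_mul (ε j) _
  -- bad rectangles
  set B := S.filter (fun j => ∃ p ∈ A, ∀ i,
      (j i : ℝ)/2^(r i) < p i ∧ p i < ((j i : ℝ) + 1)/2^(r i)) with hB
  have hBsub : B ⊆ S := Finset.filter_subset _ _
  have hgood : ∀ j ∈ S \ B, I j = -((N : ℝ) * ((1/4)^d * (1/4:ℝ)^n)) := by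
    intro j hj
    rw [Finset.mem_sdiff] at hj
    obtain ⟨hjS, hjB⟩ := hj
    have hnb : ∀ p ∈ A, ∃ i, p i ≤ (j i : ℝ)/2^(r i) ∨ ((j i : ℝ) + 1)/2^(r i) ≤ p i := by
      intro p hp
      by_contra hcon
      push_neg at hcon
      exact hjB (Finset.mem_filter.mpr ⟨hjS, p, hp, fun i => ⟨(hcon i).1, (hcon i).2⟩⟩)
    have := integral_disc_haar N A hA0 r j (hmemS j hjS)
    rw [hrn] at this
    rw [hI]
    simp only
    rw [this, Finset.sum_eq_zero, zero_sub]
    intro p hp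
    obtain ⟨i, hi⟩ := hnb p hp
    exact Finset.prod_eq_zero (Finset.mem_univ i)
      (integral_ind_haar_outside (r i) (j i) (p i) (hmemS j hjS i) hi)
  -- counting bad rectangles
  have hBcard : B.card ≤ N := by
    rw [← hcard]
    have hex : ∀ j ∈ B, ∃ p ∈ A, ∀ i,
        (j i : ℝ)/2^(r i) < p i ∧ p i < ((j i : ℝ) + 1)/2^(r i) :=
      fun j hj => (Finset.mem_filter.mp hj).2
    refine Finset.card_le_card_of_injOn (fun j => if h : ∃ p ∈ A, ∀ i,
        (j i : ℝ)/2^(r i) < p i ∧ p i < ((j i : ℝ) + 1)/2^(r i) then h.choose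
      else fun _ => 0) ?_ ?_
    · intro j hj
      simp only []
      rw [dif_pos (hex j hj)]
      exact (hex j hj).choose_spec.1
    · intro j hj j' hj' heq
      rw [Finset.mem_coe] at hj hj'
      simp only [] at heq
      rw [dif_pos (hex j hj), dif_pos (hex j' hj')] at heq
      have h1 := (hex j hj).choose_spec.2
      have h2 := (hex j' hj').choose_spec.2
      rw [heq] at h1
      funext i
      have h2k : (0:ℝ) < 2^(r i) := by positivity
      have a1 := (h1 i).1
      have a2 := (h1 i).2
      have b1 := (h2 i).1
      have b2 := (h2 i).2
      rw [div_lt_iff₀ h2k] at a1 b1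
      rw [lt_div_iff₀ h2k] at a2 b2
      have c1 : (j i : ℝ) < (j' i : ℝ) + 1 := lt_trans a1 b2
      have c2 : (j' i : ℝ) < (j i : ℝ) + 1 := lt_trans b1 a2
      have d1 : j i < j' i + 1 := by exact_mod_cast c1
      have d2 : j' i < j i + 1 := by exact_mod_cast c2
      omega
  have hScard : S.card = 2^n := by
    rw [hS, Fintype.card_piFinset]
    simp only [Finset.card_range]
    rw [Finset.prod_pow_eq_pow_sum, hrn]
  have hNn : N ≤ 2^n := le_trans (by omega) h2N
  have hsdcard : (2:ℝ)^n - (N:ℝ) ≤ ((S \ B).card : ℝ) := by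
    rw [Finset.card_sdiff_of_subset hBsub, hScard, Nat.cast_sub (le_trans hBcard hNn)]
    have : (B.card : ℝ) ≤ (N : ℝ) := by exact_mod_cast hBcard
    push_cast
    linarith
  -- final estimate
  rw [hswap]
  have habs : ∀ j, ε j * I j = |I j| := by
    intro j
    rw [hε]
    simp only
    by_cases h : 0 ≤ I j
    · rw [if_pos h, one_mul, abs_of_nonneg h]
    · rw [if_neg h, abs_of_neg (lt_of_not_ge h)]
      ring
  have hval : ∀ j ∈ S \ B, |I j| = (N : ℝ) * ((1/4)^d * (1/4:ℝ)^n) := by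
    intro j hj
    rw [hgood j hj, abs_neg, abs_of_nonneg (by positivity)]
  have hP1 : 2*(N:ℝ) ≤ 2^n := by exact_mod_cast h2N
  have hP2 : (2:ℝ)^n ≤ 4*(N:ℝ) := by
    have : ((2:ℕ)^n : ℝ) ≤ ((4*N : ℕ) : ℝ) := by exact_mod_cast h4N.le
    push_cast at this
    linarith
  have hq : ((1/4:ℝ))^n * ((2:ℝ)^n)^2 = 1 := by
    have h4 : ((2:ℝ)^n)^2 = 4^n := by
      rw [← pow_mul, mul_comm, pow_mul]
      norm_num
    rw [h4, ← mul_pow]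
    norm_num
  have hN0 : (0:ℝ) ≤ (N:ℝ) := Nat.cast_nonneg N
  have hPn0 : (0:ℝ) ≤ (2:ℝ)^n := by positivity
  have hqpos : (0:ℝ) < (1/4:ℝ)^n := by positivity
  have hx : (0:ℝ) ≤ (2:ℝ)^n - 2*(N:ℝ) := by linarith
  have hy : (0:ℝ) ≤ 4*(N:ℝ) - (2:ℝ)^n := by linarith
  have key : (1:ℝ)/8 ≤ ((2:ℝ)^n - (N:ℝ)) * ((N:ℝ) * (1/4:ℝ)^n) := by
    nlinarith [mul_nonneg (mul_nonneg hqpos.le hx) hy,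
      mul_nonneg (mul_nonneg hqpos.le hPn0) hN0, hq]
  calc ((1:ℝ)/4)^d * (1/8)
      ≤ ((2:ℝ)^n - (N:ℝ)) * ((N:ℝ) * ((1/4:ℝ)^d * (1/4:ℝ)^n)) := by
        have := mul_le_mul_of_nonneg_left key (by positivity : (0:ℝ) ≤ ((1:ℝ)/4)^d)
        nlinarith [this]
    _ ≤ ((S \ B).card : ℝ) * ((N:ℝ) * ((1/4:ℝ)^d * (1/4:ℝ)^n)) := by
        exact mul_le_mul_of_nonneg_right hsdcard (by positivity)
    _ = ∑ j ∈ S \ B, |I j| := by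
        rw [Finset.sum_congr rfl hval, Finset.sum_const, nsmul_eq_mul]
    _ ≤ ∑ j ∈ S, |I j| :=
        Finset.sum_le_sum_of_subset_of_nonneg Finset.sdiff_subset (fun j _ _ => abs_nonneg _)
    _ = ∑ j ∈ S, ε j * I j := Finset.sum_congr rfl fun j _ => (habs j).symm
end
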